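/- arXiv:1711.06019 — 3 statements merged into one kernel-verified Lean document; each statement's English description precedes it below -/
import Mathlib

section
/- If V is a finite-dimensional real inner product space, then the space L(V, ℝ^∞) of linear isometric embeddings into ℝ^∞ carries the weak (colimit) topology with respect to the filtration by the compact closed subspaces L(V, ℝ^n); that is, a subset A of L(V, ℝ^∞) is closed if and only if A ∩ L(V, ℝ^n) is closed in L(V, ℝ^n) for all n. -/
open scoped RealInnerProductSpace
noncomputable section

/-- `ℝ^∞`: the space of eventually-zero sequences of real numbers. -/
abbrev Rinf : Type := ℕ →₀ ℝ

/-- The inclusion `ℝ^n → ℝ^∞`. -/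
def inclR (n : ℕ) : EuclideanSpace ℝ (Fin n) →ₗ[ℝ] Rinf where
  toFun x := Finsupp.onFinset (Finset.range n)
    (fun m => if h : m < n then x ⟨m, h⟩ else 0)
    (fun m hm => by
      rw [Finset.mem_range]
      by_contra h
      simp [h] at hm)
  map_add' x y := Finsupp.ext fun m => by
    by_cases h : m < n <;> simp [Finsupp.onFinset_apply, h]
  map_smul' c x := Finsupp.ext fun m => by
    by_cases h : m < n <;> simp [Finsupp.onFinset_apply, h]

/-- The weak (colimit) topology on `ℝ^∞` with respect to the subspaces `ℝ^n`. -/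
instance : TopologicalSpace Rinf :=
  ⨆ n, TopologicalSpace.coinduced (inclR n) inferInstance

/-- The inner product on `ℝ^∞`. -/
def rinner (x y : Rinf) : ℝ := ∑' n, x n * y n

/-- A self-map of `ℝ^∞` is a linear isometric embedding if it is additive,
homogeneous and preserves the inner product. -/
def LinIso (f : Rinf → Rinf) : Prop :=
  (∀ a b, f (a + b) = f a + f b) ∧ (∀ (c : ℝ) (a : Rinf), f (c • a) = c • f a) ∧
    ∀ a b, rinner (f a) (f b) = rinner a b

/-- The monoid `L = L(ℝ^∞, ℝ^∞)` of (continuous) linear isometric self-embeddings of `ℝ^∞`,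
topologized as a subspace of the compact-open mapping space. -/
abbrev LMon : Type := {f : C(Rinf, Rinf) // LinIso f}


/-- The space `L(V, ℝ^∞)` of (continuous) linear isometric embeddings of a real inner
product space `V` into `ℝ^∞`, with the subspace topology from the compact-open topology. -/
abbrev LIEinf (V : Type) [NormedAddCommGroup V] [InnerProductSpace ℝ V] : Type :=
  {f : C(V, Rinf) // (∀ a b : V, f (a + b) = f a + f b) ∧
    (∀ (c : ℝ) (a : V), f (c • a) = c • f a) ∧
    ∀ a b : V, rinner (f a) (f b) = ⟪a, b⟫}

/-- The subspace `L(V, ℝ^n)` of `L(V, ℝ^∞)`: those embeddings with image inside `ℝ^n`. -/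
def LIEfin (V : Type) [NormedAddCommGroup V] [InnerProductSpace ℝ V] (n : ℕ) :
    Set (LIEinf V) :=
  {f | ∀ v : V, f.1 v ∈ Set.range (inclR n)}


-- ===== Auxiliary infrastructure =====
-- infrastructure
abbrev EE (n : ℕ) : Type := EuclideanSpace ℝ (Fin n)

lemma inclR_apply (n : ℕ) (x : EE n) (m : ℕ) :
    inclR n x m = if h : m < n then x ⟨m, h⟩ else 0 := rfl

def projR (n : ℕ) : Rinf → EE n := fun x => WithLp.toLp 2 fun i => x i

lemma projR_inclR (n : ℕ) (x : EE n) : projR n (inclR n x) = x := by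
  ext i
  simp [projR, inclR_apply, i.isLt]

lemma inclR_injective (n : ℕ) : Function.Injective (inclR n) :=
  Function.LeftInverse.injective (projR_inclR n)

lemma continuous_coord (m : ℕ) : Continuous fun x : Rinf => x m := by
  rw [continuous_iSup_dom]
  intro n
  rw [continuous_coinduced_dom]
  show Continuous fun x : EE n => inclR n x m
  simp only [inclR_apply]
  by_cases h : m < n
  · simp only [dif_pos h]
    exact (continuous_apply _).comp (PiLp.continuous_ofLp 2 _)
  · simp only [dif_neg h]
    exact continuous_const

lemma continuous_inclR (n : ℕ) : Continuous (inclR n) := by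
  rw [continuous_iff_coinduced_le]
  exact le_iSup (fun n => TopologicalSpace.coinduced (inclR n) inferInstance) n

lemma continuous_projR (n : ℕ) : Continuous (projR n) := by
  apply (PiLp.continuous_toLp 2 (fun _ : Fin n => ℝ)).comp
  exact continuous_pi fun i => continuous_coord (i : ℕ)

lemma mem_range_inclR {n : ℕ} {x : Rinf} :
    x ∈ Set.range (inclR n) ↔ ∀ m, n ≤ m → x m = 0 := by
  constructor
  · rintro ⟨y, rfl⟩ m hm
    simp [inclR_apply, Nat.not_lt.mpr hm]
  · intro h
    refine ⟨projR n x, ?_⟩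
    ext m
    by_cases hm : m < n
    · simp [inclR_apply, hm, projR]
    · simp [inclR_apply, hm, h m (Nat.not_lt.mp hm)]

lemma inclR_projR {n : ℕ} {x : Rinf} (h : x ∈ Set.range (inclR n)) :
    inclR n (projR n x) = x := by
  obtain ⟨y, rfl⟩ := h
  rw [projR_inclR]

lemma range_inclR_mono {n m : ℕ} (h : n ≤ m) :
    Set.range (inclR n) ⊆ Set.range (inclR m) := by
  intro x hx
  rw [mem_range_inclR] at hx ⊢
  exact fun k hk => hx k (h.trans hk)

def incE (k m : ℕ) : EE k → EE m := fun x => projR m (inclR k x)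

lemma continuous_incE (k m : ℕ) : Continuous (incE k m) :=
  (continuous_projR m).comp (continuous_inclR k)

lemma inclR_incE {k m : ℕ} (h : k ≤ m) (x : EE k) :
    inclR m (incE k m x) = inclR k x := by
  apply inclR_projR
  exact range_inclR_mono h ⟨x, rfl⟩

lemma incE_self (k : ℕ) (x : EE k) : incE k k x = x := projR_inclR k x

lemma incE_trans {a b c : ℕ} (hab : a ≤ b) (hbc : b ≤ c) (x : EE a) :
    incE b c (incE a b x) = incE a c x := by
  apply inclR_injective c
  rw [inclR_incE hbc, inclR_incE hab, inclR_incE (hab.trans hbc)]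

lemma rinner_inclR (n : ℕ) (a b : EE n) :
    rinner (inclR n a) (inclR n b) = ⟪a, b⟫ := by
  rw [rinner]
  have h0 : ∀ m ∉ Finset.range n, inclR n a m * inclR n b m = 0 := by
    intro m hm
    rw [Finset.mem_range, Nat.not_lt] at hm
    simp [inclR_apply, Nat.not_lt.mpr hm]
  rw [tsum_eq_sum h0]
  rw [PiLp.inner_apply]
  rw [Finset.sum_range fun m => inclR n a m * inclR n b m]
  congr 1
  funext i
  simp [inclR_apply, i.isLt, RCLike.inner_apply, conj_trivial, mul_comm]

-- ==== new content ====
section VSec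
variable {V : Type} [NormedAddCommGroup V] [InnerProductSpace ℝ V]

/-- The underlying linear map of an element of `LIEinf V`. -/
def toLinM (f : LIEinf V) : V →ₗ[ℝ] Rinf where
  toFun := f.1
  map_add' := f.2.1
  map_smul' := f.2.2.1

lemma toLinM_apply (f : LIEinf V) (v : V) : toLinM f v = f.1 v := rfl

lemma LIEinf_ext {f g : LIEinf V} (h : ∀ v, f.1 v = g.1 v) : f = g :=
  Subtype.ext (ContinuousMap.ext h)

lemma continuous_evalb (v : V) : Continuous fun f : LIEinf V => f.1 v :=
  (continuous_eval_const v).comp continuous_subtype_val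

lemma LIEfin_mono {n m : ℕ} (h : n ≤ m) : LIEfin V n ⊆ LIEfin V m :=
  fun f hf v => range_inclR_mono h (hf v)

variable [FiniteDimensional ℝ V]

variable (V) in
abbrev dV : ℕ := Module.finrank ℝ V
variable (V) in
abbrev bV : Module.Basis (Fin (dV V)) ℝ V := Module.finBasis ℝ V

lemma mem_LIEfin_of_basis {f : LIEinf V} {n : ℕ}
    (h : ∀ i, f.1 (bV V i) ∈ Set.range (inclR n)) : f ∈ LIEfin V n := by
  intro v
  have hv : f.1 v = ∑ i, ((bV V).repr v i) • f.1 (bV V i) := by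
    have := ((bV V).sum_repr v).symm
    calc f.1 v = toLinM f v := rfl
    _ = toLinM f (∑ i, (bV V).repr v i • bV V i) := by rw [(bV V).sum_repr v]
    _ = ∑ i, ((bV V).repr v i) • toLinM f (bV V i) := by
        rw [map_sum]
        exact Finset.sum_congr rfl fun i _ => (toLinM f).map_smul _ _
  rw [hv, mem_range_inclR]
  intro m hm
  rw [Finsupp.finset_sum_apply]
  apply Finset.sum_eq_zero
  intro i _
  rw [Finsupp.smul_apply]
  rw [mem_range_inclR.mp (h i) m hm, smul_zero]

lemma eq_of_basis_eq {f g : LIEinf V} (h : ∀ i, f.1 (bV V i) = g.1 (bV V i)) : f = g := by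
  have : toLinM f = toLinM g := (bV V).ext h
  exact LIEinf_ext fun v => by
    rw [← toLinM_apply, ← toLinM_apply, this]

lemma exists_mem_LIEfin (f : LIEinf V) : ∃ n, f ∈ LIEfin V n := by
  have h : ∀ i : Fin (dV V), ∃ n, f.1 (bV V i) ∈ Set.range (inclR n) := by
    intro i
    obtain ⟨n, hn⟩ := (f.1 (bV V i)).support.exists_nat_subset_range
    refine ⟨n, mem_range_inclR.mpr fun m hm => ?_⟩
    by_contra hne
    have := hn (Finsupp.mem_support_iff.mpr hne)
    rw [Finset.mem_range] at this
    omega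
  choose N hN using h
  refine ⟨Finset.univ.sup N, mem_LIEfin_of_basis fun i => ?_⟩
  exact range_inclR_mono (Finset.le_sup (Finset.mem_univ i)) (hN i)

/-- Evaluation of basis vectors, projected to level `n`. -/
def evE (n : ℕ) : LIEinf V → (Fin (dV V) → EE n) := fun f i => projR n (f.1 (bV V i))

lemma continuous_evE (n : ℕ) : Continuous (evE (V := V) n) :=
  continuous_pi fun i => (continuous_projR n).comp (continuous_evalb _)

lemma inclR_evE {n : ℕ} {f : LIEinf V} (hf : f ∈ LIEfin V n) (i : Fin (dV V)) :
    inclR n (evE n f i) = f.1 (bV V i) := inclR_projR (hf _)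

lemma evE_injOn {n : ℕ} {f g : LIEinf V} (hf : f ∈ LIEfin V n) (hg : g ∈ LIEfin V n)
    (h : evE n f = evE n g) : f = g := by
  refine eq_of_basis_eq fun i => ?_
  rw [← inclR_evE hf i, ← inclR_evE hg i, h]

lemma isClosed_LIEfin (n : ℕ) : IsClosed (LIEfin V n) := by
  have : LIEfin V n = ⋂ (v : V) (m : ℕ) (_ : n ≤ m), {f : LIEinf V | f.1 v m = 0} := by
    ext f
    constructor
    · intro hf
      exact Set.mem_iInter.mpr fun v => Set.mem_iInter.mpr fun m => Set.mem_iInter.mpr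
        fun hm => mem_range_inclR.mp (hf v) m hm
    · intro h v
      exact mem_range_inclR.mpr fun m hm =>
        Set.mem_iInter.mp (Set.mem_iInter.mp (Set.mem_iInter.mp h v) m) hm
  rw [this]
  exact isClosed_iInter fun v => isClosed_iInter fun m => isClosed_iInter fun _ =>
    isClosed_eq ((continuous_coord m).comp (continuous_evalb v)) continuous_const

lemma isCompact_LIEfin (n : ℕ) : IsCompact (LIEfin V n) := by
  classical
  set St : Set (V →L[ℝ] EE n) := {A | ∀ v w : V, ⟪A v, A w⟫ = ⟪v, w⟫} with hSt
  have hStClosed : IsClosed St := by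
    have : St = ⋂ (v : V) (w : V), {A : V →L[ℝ] EE n | ⟪A v, A w⟫ = ⟪v, w⟫} := by
      ext A; simp [hSt]
    rw [this]
    refine isClosed_iInter fun v => isClosed_iInter fun w => isClosed_eq ?_ continuous_const
    exact Continuous.inner ((ContinuousLinearMap.apply ℝ (EE n) v).continuous)
      ((ContinuousLinearMap.apply ℝ (EE n) w).continuous)
  have hStBdd : St ⊆ Metric.closedBall 0 1 := by
    intro A hA
    rw [Metric.mem_closedBall, dist_zero_right]
    refine ContinuousLinearMap.opNorm_le_bound A zero_le_one fun v => ?_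
    have h1 : ‖A v‖ * ‖A v‖ = ‖v‖ * ‖v‖ := by
      rw [← real_inner_self_eq_norm_mul_norm, ← real_inner_self_eq_norm_mul_norm]
      exact hA v v
    rw [one_mul]
    exact le_of_eq ((mul_self_inj_of_nonneg (norm_nonneg _) (norm_nonneg _)).mp h1)
  have hStCompact : IsCompact St :=
    Metric.isCompact_of_isClosed_isBounded hStClosed
      (Metric.isBounded_closedBall.subset hStBdd)
  -- the map into LIEinf
  have hΘcont : Continuous (fun A : (V →L[ℝ] EE n) =>
      (ContinuousMap.mk (fun v => inclR n (A v))
        ((continuous_inclR n).comp A.continuous) : C(V, Rinf))) := by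
    apply ContinuousMap.continuous_of_continuous_uncurry
    exact (continuous_inclR n).comp isBoundedBilinearMap_apply.continuous
  let Ψ : ↥St → LIEinf V := fun A =>
    ⟨ContinuousMap.mk (fun v => inclR n (A.1 v))
        ((continuous_inclR n).comp A.1.continuous),
      fun a b => by simp [map_add],
      fun c a => by simp [map_smul],
      fun a b => by simpa [rinner_inclR] using A.2 a b⟩
  have hΨcont : Continuous Ψ :=
    Continuous.subtype_mk (hΘcont.comp continuous_subtype_val) _
  have hrange : LIEfin V n = Set.range Ψ := by
    ext f
    constructor
    · intro hf
      have hL : ∀ v : V, inclR n (projR n (f.1 v)) = f.1 v := fun v => inclR_projR (hf v)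
      let Alin : V →ₗ[ℝ] EE n :=
        { toFun := fun v => projR n (f.1 v)
          map_add' := fun a b => by
            apply inclR_injective n
            rw [map_add (inclR n), hL, hL, hL, f.2.1]
          map_smul' := fun c a => by
            apply inclR_injective n
            rw [RingHom.id_apply, map_smul (inclR n), hL, hL, f.2.2.1] }
      let A : V →L[ℝ] EE n := LinearMap.toContinuousLinearMap Alin
      have hAapp : ∀ v, A v = projR n (f.1 v) := fun v => rfl
      have hASt : A ∈ St := by
        intro v w
        rw [← rinner_inclR, hAapp, hAapp, hL, hL]
        exact f.2.2.2 v w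
      refine ⟨⟨A, hASt⟩, ?_⟩
      apply LIEinf_ext
      intro v
      show inclR n (A v) = f.1 v
      rw [hAapp, hL]
    · rintro ⟨A, rfl⟩ v
      exact ⟨A.1 v, rfl⟩
  rw [hrange]
  haveI : CompactSpace ↥St := isCompact_iff_compactSpace.mp hStCompact
  exact isCompact_range hΨcont

end VSec

-- ===== The key metric lemma: products of cthickenings =====
lemma pi_cthickening_subset {ι : Type} [Fintype ι] {X : ι → Type}
    [∀ i, PseudoMetricSpace (X i)] (δ : ℝ) (S : ∀ i, Set (X i)) :
    (Set.univ.pi fun i => Metric.cthickening δ (S i)) ⊆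
      Metric.cthickening δ (Set.univ.pi S) := by
  intro y hy
  rw [Metric.mem_cthickening_iff]
  refine ENNReal.le_of_forall_pos_le_add fun ε hε _ => ?_
  have key : ∀ i, ∃ s ∈ S i, edist (y i) s < ENNReal.ofReal δ + ε := by
    intro i
    have h1 : EMetric.infEdist (y i) (S i) ≤ ENNReal.ofReal δ :=
      Metric.mem_cthickening_iff.mp (hy i (Set.mem_univ i))
    have h2 : EMetric.infEdist (y i) (S i) < ENNReal.ofReal δ + ε :=
      h1.trans_lt (ENNReal.lt_add_right ENNReal.ofReal_ne_top
        (by exact_mod_cast hε.ne'))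
    exact EMetric.infEdist_lt_iff.mp h2
  choose s hs hd using key
  refine le_trans (EMetric.infEdist_le_edist_of_mem (x := y) (y := s)
    fun i _ => hs i) ?_
  rw [edist_pi_def]
  exact Finset.sup_le fun i _ => (hd i).le

-- ===== The recursively defined families of compact/open boxes =====
def Kseq (d n₀ : ℕ) (δ0 : ℝ) (x0 : Fin d → EE n₀)
    (δf : ∀ n, (Fin d → Set (EE n)) → ℝ) : ∀ t, Fin d → Set (EE (n₀ + t))
  | 0 => fun i => Metric.cthickening δ0 {x0 i}
  | t + 1 => fun i =>
      Metric.cthickening (δf (n₀ + t) (Kseq d n₀ δ0 x0 δf t))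
        (incE (n₀ + t) (n₀ + t + 1) '' Kseq d n₀ δ0 x0 δf t i)

def Useq (d n₀ : ℕ) (δ0 : ℝ) (x0 : Fin d → EE n₀)
    (δf : ∀ n, (Fin d → Set (EE n)) → ℝ) : ∀ t, Fin d → Set (EE (n₀ + t))
  | 0 => fun i => Metric.thickening δ0 {x0 i}
  | t + 1 => fun i =>
      Metric.thickening (δf (n₀ + t) (Kseq d n₀ δ0 x0 δf t))
        (incE (n₀ + t) (n₀ + t + 1) '' Kseq d n₀ δ0 x0 δf t i)


/-- For a finite-dimensional real inner product space `V`, the space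
`L(V, ℝ^∞)` carries the weak (colimit) topology with respect to the filtration by the
compact closed subspaces `L(V, ℝ^n)`: each `L(V, ℝ^n)` is compact and closed, and a subset
`A ⊆ L(V, ℝ^∞)` is closed if and only if `A ∩ L(V, ℝ^n)` is closed in `L(V, ℝ^n)` for all
`n`. -/
theorem LIEinf_weak_topology (V : Type) [NormedAddCommGroup V] [InnerProductSpace ℝ V]
    [FiniteDimensional ℝ V] :
    (∀ n, IsCompact (LIEfin V n) ∧ IsClosed (LIEfin V n)) ∧
      ∀ A : Set (LIEinf V),
        IsClosed A ↔ ∀ n, IsClosed (Subtype.val ⁻¹' A : Set ↥(LIEfin V n)) := by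
  classical
  refine ⟨fun n => ⟨isCompact_LIEfin n, isClosed_LIEfin n⟩,
    fun A => ⟨fun hA n => hA.preimage continuous_subtype_val, fun hA => ?_⟩⟩
  -- A ∩ L(V, ℝ^n) is compact
  have hAL : ∀ n, IsCompact (A ∩ LIEfin V n) := by
    intro n
    haveI : CompactSpace ↥(LIEfin V n) := isCompact_iff_compactSpace.mp (isCompact_LIEfin n)
    have h1 : IsCompact (Subtype.val ⁻¹' A : Set ↥(LIEfin V n)) := (hA n).isCompact
    have h2 := h1.image continuous_subtype_val
    rwa [Subtype.image_preimage_coe, Set.inter_comm] at h2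
  set d := dV V with hd
  set Cfin : ∀ n, Set (Fin d → EE n) := fun n => evE n '' (A ∩ LIEfin V n) with hCfin
  have hCfin_cpt : ∀ n, IsCompact (Cfin n) := fun n => (hAL n).image (continuous_evE n)
  have hCfin_cl : ∀ n, IsClosed (Cfin n) := fun n => (hCfin_cpt n).isClosed
  -- choice of separating radii
  have hsep : ∀ (n : ℕ) (K : Fin d → Set (EE n)), ∃ δ : ℝ, 0 < δ ∧
      (((∀ i, IsCompact (K i)) ∧
        (Set.univ.pi (fun i => incE n (n+1) '' K i) ∩ Cfin (n+1) = ∅)) →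
        Metric.cthickening δ (Set.univ.pi (fun i => incE n (n+1) '' K i)) ∩ Cfin (n+1) = ∅) := by
    intro n K
    by_cases hyp : (∀ i, IsCompact (K i)) ∧
        (Set.univ.pi (fun i => incE n (n+1) '' K i) ∩ Cfin (n+1) = ∅)
    · have hcpt : IsCompact (Set.univ.pi fun i => incE n (n+1) '' K i) :=
        isCompact_univ_pi fun i => (hyp.1 i).image (continuous_incE _ _)
      have hsub : (Set.univ.pi fun i => incE n (n+1) '' K i) ⊆ (Cfin (n+1))ᶜ :=
        Set.subset_compl_iff_disjoint_right.mpr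
          (Set.disjoint_iff_inter_eq_empty.mpr hyp.2)
      obtain ⟨δ, hδ, hsubδ⟩ := hcpt.exists_cthickening_subset_open
        (hCfin_cl (n+1)).isOpen_compl hsub
      exact ⟨δ, hδ, fun _ => Set.disjoint_iff_inter_eq_empty.mp
        (Set.subset_compl_iff_disjoint_right.mp hsubδ)⟩
    · exact ⟨1, one_pos, fun h => absurd h hyp⟩
  choose δf hδf_pos hδf_spec using hsep
  -- show the complement of A is open
  rw [← isOpen_compl_iff, isOpen_iff_forall_mem_open]
  intro f hf
  rw [Set.mem_compl_iff] at hf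
  obtain ⟨n₀, hfn₀⟩ := exists_mem_LIEfin f
  set x0 : Fin d → EE n₀ := evE n₀ f with hx0
  have hx0notin : x0 ∉ Cfin n₀ := by
    rintro ⟨g, ⟨hgA, hgL⟩, hgev⟩
    exact hf ((evE_injOn hgL hfn₀ hgev) ▸ hgA)
  obtain ⟨δ0, hδ0pos, hδ0⟩ := (isCompact_singleton : IsCompact ({x0} : Set (Fin d → EE n₀))).exists_cthickening_subset_open
    (hCfin_cl n₀).isOpen_compl (Set.singleton_subset_iff.mpr hx0notin)
  set Kt := Kseq d n₀ δ0 x0 δf with hKt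
  set Ut := Useq d n₀ δ0 x0 δf with hUt
  -- the fundamental invariant
  have Inv : ∀ t, (∀ i, IsCompact (Kt t i)) ∧
      (Set.univ.pi (Kt t) ∩ Cfin (n₀ + t) = ∅) := by
    intro t
    induction t with
    | zero =>
      refine ⟨fun i => isCompact_singleton.cthickening, ?_⟩
      have h1 : Set.univ.pi (Kt 0) ⊆ Metric.cthickening δ0 {x0} := by
        refine le_trans ?_ (by rw [Set.univ_pi_singleton (f := x0)] :
          Metric.cthickening δ0 (Set.univ.pi fun i => ({x0 i} : Set (EE n₀))) ⊆
            Metric.cthickening δ0 {x0})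
        exact pi_cthickening_subset δ0 _
      exact Set.disjoint_iff_inter_eq_empty.mp (Set.subset_compl_iff_disjoint_right.mp
        (h1.trans hδ0))
    | succ t ih =>
      have hdisj' : Set.univ.pi (fun i => incE (n₀+t) (n₀+t+1) '' Kt t i) ∩
          Cfin (n₀+t+1) = ∅ := by
        rw [Set.eq_empty_iff_forall_notMem]
        rintro y ⟨hy1, hy2⟩
        obtain ⟨g, ⟨hgA, hgL⟩, hgev⟩ := hy2
        have hk : ∀ i, ∃ k ∈ Kt t i, incE (n₀+t) (n₀+t+1) k = y i := by
          intro i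
          obtain ⟨k, hk1, hk2⟩ := hy1 i (Set.mem_univ i)
          exact ⟨k, hk1, hk2⟩
        choose k hkmem hkeq using hk
        have hgb : ∀ i, g.1 (bV V i) = inclR (n₀+t) (k i) := by
          intro i
          rw [← inclR_evE hgL i, hgev, ← hkeq i, inclR_incE (Nat.le_succ _)]
        have hgL' : g ∈ LIEfin V (n₀+t) :=
          mem_LIEfin_of_basis fun i => (hgb i) ▸ ⟨k i, rfl⟩
        have hev : evE (n₀+t) g = k := by
          funext i
          show projR (n₀+t) (g.1 (bV V i)) = k i
          rw [hgb i, projR_inclR]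
        have : evE (n₀+t) g ∈ Set.univ.pi (Kt t) ∩ Cfin (n₀+t) :=
          ⟨by rw [hev]; exact fun i _ => hkmem i, ⟨g, ⟨hgA, hgL'⟩, rfl⟩⟩
        rw [ih.2] at this
        exact this
      have hstep := hδf_spec (n₀+t) (Kt t) ⟨ih.1, hdisj'⟩
      refine ⟨fun i => ((ih.1 i).image (continuous_incE _ _)).cthickening, ?_⟩
      have h1 : Set.univ.pi (Kt (t+1)) ⊆
          Metric.cthickening (δf (n₀+t) (Kt t))
            (Set.univ.pi fun i => incE (n₀+t) (n₀+t+1) '' Kt t i) :=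
        pi_cthickening_subset _ _
      rw [Set.eq_empty_iff_forall_notMem]
      rintro y ⟨hy1, hy2⟩
      have : y ∈ Metric.cthickening (δf (n₀+t) (Kt t))
          (Set.univ.pi fun i => incE (n₀+t) (n₀+t+1) '' Kt t i) ∩ Cfin (n₀+t+1) :=
        ⟨h1 hy1, hy2⟩
      rw [hstep] at this
      exact this
  -- properties of the open boxes
  have hUopen : ∀ t i, IsOpen (Ut t i) := by
    intro t i
    cases t <;> exact Metric.isOpen_thickening
  have hUK : ∀ t i, Ut t i ⊆ Kt t i := by
    intro t i
    cases t <;> exact Metric.thickening_subset_cthickening _ _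
  have hgrow : ∀ t i, incE (n₀+t) (n₀+t+1) '' Ut t i ⊆ Ut (t+1) i := by
    intro t i
    refine (Set.image_mono (hUK t i)).trans ?_
    exact Metric.self_subset_thickening (hδf_pos _ _) _
  have hchainR : ∀ i t t', t ≤ t' →
      inclR (n₀+t) '' Ut t i ⊆ inclR (n₀+t') '' Ut t' i := by
    intro i t t' htt'
    induction t', htt' using Nat.le_induction with
    | base => exact subset_rfl
    | succ t' htt' ih =>
      refine ih.trans ?_
      rintro z ⟨u, hu, rfl⟩
      exact ⟨incE (n₀+t') (n₀+t'+1) u, hgrow t' i ⟨u, hu, rfl⟩,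
        inclR_incE (Nat.le_succ _) u⟩
  -- the final open neighborhood
  set O : Fin d → Set Rinf := fun i => ⋃ t, inclR (n₀+t) '' Ut t i with hO
  have hOopen : ∀ i, IsOpen (O i) := by
    intro i
    have hO2 : ∀ k, IsOpen ((inclR k) ⁻¹' (O i)) := by
      intro k
      have hpre : (inclR k) ⁻¹' (O i) =
          ⋃ (t : ℕ) (_ : k ≤ n₀ + t), incE k (n₀+t) ⁻¹' (Ut t i) := by
        ext x
        simp only [Set.mem_preimage, Set.mem_iUnion, hO]
        constructor
        · rintro ⟨t, hmem⟩
          have h1 : inclR k x ∈ inclR (n₀+(t+k)) '' Ut (t+k) i :=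
            hchainR i t (t+k) (Nat.le_add_right _ _) hmem
          obtain ⟨u, hu, hequ⟩ := h1
          refine ⟨t+k, by omega, ?_⟩
          have : incE k (n₀+(t+k)) x = u := by
            have h2 := congrArg (projR (n₀+(t+k))) hequ
            rw [projR_inclR] at h2
            exact h2.symm
          rwa [this]
        · rintro ⟨t, ht, hmem⟩
          exact ⟨t, incE k (n₀+t) x, hmem, inclR_incE ht x⟩
      rw [hpre]
      exact isOpen_iUnion fun t => isOpen_iUnion fun _ =>
        (hUopen t i).preimage (continuous_incE _ _)
    exact isOpen_iSup_iff.mpr fun k => isOpen_coinduced.mpr (hO2 k)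
  refine ⟨⋂ i, (fun g : LIEinf V => g.1 (bV V i)) ⁻¹' O i, ?_, ?_, ?_⟩
  · -- contained in the complement of A
    intro g hg
    rw [Set.mem_compl_iff]
    intro hgA
    obtain ⟨m, hgm⟩ := exists_mem_LIEfin g
    have hcoords : ∀ i, ∃ t, g.1 (bV V i) ∈ inclR (n₀+t) '' Ut t i := by
      intro i
      exact Set.mem_iUnion.mp (Set.mem_iInter.mp hg i)
    choose ti hti using hcoords
    set T := m + Finset.univ.sup ti with hT
    have hgT : g ∈ LIEfin V (n₀ + T) := LIEfin_mono (by omega) hgm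
    have h1 : evE (n₀+T) g ∈ Set.univ.pi (Kt T) := by
      intro i _
      have hyT : g.1 (bV V i) ∈ inclR (n₀+T) '' Ut T i :=
        hchainR i (ti i) T (by
          have := Finset.le_sup (f := ti) (Finset.mem_univ i)
          omega) (hti i)
      obtain ⟨u, hu, hequ⟩ := hyT
      have : evE (n₀+T) g i = u := by
        show projR (n₀+T) (g.1 (bV V i)) = u
        rw [← hequ, projR_inclR]
      rw [this]
      exact hUK T i hu
    have h2 : evE (n₀+T) g ∈ Cfin (n₀+T) := ⟨g, ⟨hgA, hgT⟩, rfl⟩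
    have h3 := (Inv T).2
    rw [Set.eq_empty_iff_forall_notMem] at h3
    exact h3 _ ⟨h1, h2⟩
  · exact isOpen_iInter_of_finite fun i => (hOopen i).preimage (continuous_evalb _)
  · refine Set.mem_iInter.mpr fun i => ?_
    show f.1 (bV V i) ∈ O i
    refine Set.mem_iUnion.mpr ⟨0, x0 i, ?_, ?_⟩
    · exact Metric.self_subset_thickening hδ0pos _ rfl
    · exact inclR_evE hfn₀ i

end
end

section
/- Let G be a compact topological group acting continuously on ℝ^∞ by linear isometries. Then every finite-dimensional subspace of ℝ^∞ is contained in a finite-dimensional G-invariant subspace. -/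
open scoped RealInnerProductSpace
noncomputable section

/-- Any linear functional on `ℝ^∞` is continuous for the weak topology. -/
lemma Rinf.linearMap_continuous (f : Rinf →ₗ[ℝ] ℝ) : Continuous f := by
  show @Continuous _ _ (⨆ n, TopologicalSpace.coinduced (inclR n) inferInstance) _ f
  rw [continuous_iSup_dom]
  intro n
  rw [continuous_coinduced_dom]
  exact (f.comp (inclR n)).continuous_of_finiteDimensional

/-- Recursively chosen coefficients making a linear functional unbounded on a sequence. -/
noncomputable def coeffSeq (x : ℕ → Rinf) (m : ℕ → ℕ) : ℕ → ℝ
  | k => ((k : ℝ) - ∑ j ∈ (Finset.range k).attach,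
      (x k) (m j.1) * coeffSeq x m j.1) / (x k) (m k)
  decreasing_by exact Finset.mem_range.mp j.2

lemma coeffSeq_key (x : ℕ → Rinf) (m : ℕ → ℕ) (hx : ∀ k, x k (m k) ≠ 0) (k : ℕ) :
    ∑ j ∈ Finset.range (k + 1), x k (m j) * coeffSeq x m j = (k : ℝ) := by
  rw [Finset.sum_range_succ]
  have h1 : ∑ j ∈ (Finset.range k).attach, (x k) (m j.1) * coeffSeq x m j.1
      = ∑ j ∈ Finset.range k, x k (m j) * coeffSeq x m j := by
    exact Finset.sum_attach (Finset.range k) (fun j => (x k) (m j) * coeffSeq x m j)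
  have h2 : coeffSeq x m k = ((k : ℝ) - ∑ j ∈ Finset.range k,
      x k (m j) * coeffSeq x m j) / (x k) (m k) := by
    rw [coeffSeq, h1]
  rw [h2, mul_comm ((x k) (m k)), div_mul_cancel₀ _ (hx k)]
  ring

/-- Every compact subset of `ℝ^∞` lies in some `ℝ^n`. -/
lemma compact_subset_supported {K : Set Rinf} (hK : IsCompact K) :
    ∃ n : ℕ, K ⊆ ↑(Finsupp.supported ℝ ℝ (↑(Finset.range n) : Set ℕ)) := by
  by_contra hcon
  push_neg at hcon
  have H : ∀ n : ℕ, ∃ x, x ∈ K ∧ ∃ m, n ≤ m ∧ x m ≠ 0 := by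
    intro n
    obtain ⟨x, hxK, hx⟩ := Set.not_subset.mp (hcon n)
    refine ⟨x, hxK, ?_⟩
    rw [SetLike.mem_coe, Finsupp.mem_supported] at hx
    obtain ⟨p, hp1, hp2⟩ := Set.not_subset.mp hx
    refine ⟨p, ?_, Finsupp.mem_support_iff.mp hp1⟩
    simpa [Finset.mem_coe, Finset.mem_range, not_lt] using hp2
  choose F hFK M hM hFM using H
  set N : ℕ → ℕ := fun k => Nat.rec 0
    (fun _ Nk => max (M Nk + 1) ((F Nk).support.sup id + 1)) k with hN
  set x : ℕ → Rinf := fun k => F (N k) with hxdef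
  set m : ℕ → ℕ := fun k => M (N k) with hmdef
  have hNsucc : ∀ k, N (k + 1) = max (m k + 1) ((x k).support.sup id + 1) := fun k => rfl
  have hNm : ∀ k, N k ≤ m k := fun k => hM (N k)
  have hxm : ∀ k, x k (m k) ≠ 0 := fun k => hFM (N k)
  have hxK : ∀ k, x k ∈ K := fun k => hFK (N k)
  have hmN : ∀ k, m k < N (k + 1) := fun k => by
    rw [hNsucc]; exact lt_of_lt_of_le (Nat.lt_succ_self _) (le_max_left _ _)
  have hNmono : StrictMono N := strictMono_nat_of_lt_succ fun k =>
    lt_of_le_of_lt (hNm k) (hmN k)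
  have hsupp : ∀ k p, N (k + 1) ≤ p → x k p = 0 := by
    intro k p hp
    by_contra h
    have : p ∈ (x k).support := Finsupp.mem_support_iff.mpr h
    have : p ≤ (x k).support.sup id := Finset.le_sup (f := id) this
    have : p < N (k + 1) := by
      rw [hNsucc]; exact lt_of_lt_of_le (Nat.lt_succ_of_le this) (le_max_right _ _)
    omega
  have hmmono : StrictMono m := by
    intro j k hjk
    calc m j < N (j + 1) := hmN j
    _ ≤ N k := hNmono.le_iff_le.mpr hjk
    _ ≤ m k := hNm k
  have hcross : ∀ j k, j < k → x j (m k) = 0 := by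
    intro j k hjk
    exact hsupp j (m k) (le_trans (hNmono.le_iff_le.mpr hjk) (hNm k))
  -- the unbounded continuous linear functional
  set a : ℕ → ℝ := coeffSeq x m with ha
  set c : ℕ → ℝ := fun p => @dite _ (∃ j, m j = p) (Classical.dec _)
    (fun h => a h.choose) (fun _ => 0) with hc
  have hcm : ∀ j, c (m j) = a j := by
    intro j
    have hex : ∃ j', m j' = m j := ⟨j, rfl⟩
    have := hex.choose_spec
    have : hex.choose = j := hmmono.injective this
    simp only [hc, dif_pos hex, this]
  set f : Rinf →ₗ[ℝ] ℝ := Finsupp.linearCombination ℝ c with hf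
  have hfx : ∀ k, f (x k) = (k : ℝ) := by
    intro k
    have hval : f (x k) = ∑ p ∈ (x k).support, x k p * c p := by
      rw [hf, Finsupp.linearCombination_apply, Finsupp.sum]
      simp [smul_eq_mul]
    set T : Finset ℕ := (Finset.range (k + 1)).image m with hT
    have hsub1 : (x k).support ⊆ (x k).support ∪ T := Finset.subset_union_left
    have hsub2 : T ⊆ (x k).support ∪ T := Finset.subset_union_right
    have e1 : ∑ p ∈ (x k).support ∪ T, x k p * c p
        = ∑ p ∈ (x k).support, x k p * c p := by
      refine (Finset.sum_subset hsub1 ?_).symm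
      intro p _ hp
      rw [Finsupp.notMem_support_iff.mp hp, zero_mul]
    have e2 : ∑ p ∈ (x k).support ∪ T, x k p * c p = ∑ p ∈ T, x k p * c p := by
      refine (Finset.sum_subset hsub2 ?_).symm
      intro p hpu hpT
      by_cases hcp : ∃ j, m j = p
      · obtain ⟨j, hj⟩ := hcp
        have hjk : k < j := by
          by_contra hle
          exact hpT (Finset.mem_image.mpr ⟨j, Finset.mem_range.mpr (by omega), hj⟩)
        rw [← hj, hcross k j hjk, zero_mul]
      · simp only [hc, dif_neg hcp, mul_zero]
    have e3 : ∑ p ∈ T, x k p * c p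
        = ∑ j ∈ Finset.range (k + 1), x k (m j) * c (m j) := by
      rw [hT]
      exact Finset.sum_image fun i _ j _ h => hmmono.injective h
    have e4 : ∑ j ∈ Finset.range (k + 1), x k (m j) * c (m j)
        = ∑ j ∈ Finset.range (k + 1), x k (m j) * a j :=
      Finset.sum_congr rfl fun j _ => by rw [hcm]
    rw [hval, ← e1, e2, e3, e4, ha]
    exact coeffSeq_key x m hxm k
  obtain ⟨B, hB⟩ : BddAbove (f '' K) := (hK.image (Rinf.linearMap_continuous f)).bddAbove
  obtain ⟨k, hk⟩ := exists_nat_gt B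
  have : f (x k) ≤ B := hB (Set.mem_image_of_mem f (hxK k))
  rw [hfx k] at this
  linarith

/-- Let `G` be a compact topological group acting continuously on `ℝ^∞`
by linear isometries. Then every finite-dimensional subspace of `ℝ^∞` is contained in a
finite-dimensional `G`-invariant subspace. -/
theorem exists_finiteDimensional_invariant (G : Type) [Group G] [TopologicalSpace G]
    [IsTopologicalGroup G] [CompactSpace G]
    (σ : G → Rinf → Rinf)
    (hcont : Continuous fun p : G × Rinf => σ p.1 p.2)
    (hone : ∀ x, σ 1 x = x)
    (hmul : ∀ g h x, σ (g * h) x = σ g (σ h x))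
    (hadd : ∀ g a b, σ g (a + b) = σ g a + σ g b)
    (hsmul : ∀ g (c : ℝ) a, σ g (c • a) = c • σ g a)
    (hinner : ∀ g a b, rinner (σ g a) (σ g b) = rinner a b)
    (U : Submodule ℝ Rinf) (hU : FiniteDimensional ℝ U) :
    ∃ W : Submodule ℝ Rinf, FiniteDimensional ℝ W ∧ U ≤ W ∧
      ∀ g, ∀ x ∈ W, σ g x ∈ W := by
  set T : G → Rinf →ₗ[ℝ] Rinf := fun g =>
    { toFun := σ g, map_add' := hadd g, map_smul' := hsmul g } with hT
  obtain ⟨s, hs⟩ : U.FG := (Submodule.fg_iff_finiteDimensional U).mpr hU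
  set K : Set Rinf := ⋃ v ∈ (s : Set Rinf), Set.range fun g => σ g v with hKdef
  have hKcomp : IsCompact K := by
    refine s.finite_toSet.isCompact_biUnion fun v _ => isCompact_range ?_
    exact hcont.comp (continuous_id.prodMk continuous_const)
  obtain ⟨n, hn⟩ := compact_subset_supported hKcomp
  set V : Submodule ℝ Rinf := Finsupp.supported ℝ ℝ (↑(Finset.range n) : Set ℕ) with hV
  have hVfd : FiniteDimensional ℝ V := by
    have e := (Finsupp.supportedEquivFinsupp (M := ℝ) (R := ℝ)
      (↑(Finset.range n) : Set ℕ))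
    have : Module.Finite ℝ ((↑(Finset.range n) : Set ℕ) →₀ ℝ) := by infer_instance
    exact Module.Finite.equiv e.symm
  have hUV : ∀ g, ∀ u ∈ U, σ g u ∈ V := by
    intro g u hu
    have h1 : (T g) '' (s : Set Rinf) ⊆ ↑V := by
      rintro _ ⟨v, hv, rfl⟩
      exact hn (Set.mem_biUnion hv ⟨g, rfl⟩)
    have h2 : U.map (T g) ≤ V := by
      rw [← hs, Submodule.map_span, Submodule.span_le]
      exact h1
    exact h2 ⟨u, hu, rfl⟩
  set W : Submodule ℝ Rinf := Submodule.span ℝ (⋃ g : G, σ g '' (U : Set Rinf)) with hW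
  refine ⟨W, ?_, ?_, ?_⟩
  · have hWV : W ≤ V := by
      rw [hW, Submodule.span_le]
      rintro _ ⟨S, ⟨g, rfl⟩, ⟨u, hu, rfl⟩⟩
      exact hUV g u hu
    exact Submodule.finiteDimensional_of_le hWV
  · intro u hu
    apply Submodule.subset_span
    exact Set.mem_iUnion.mpr ⟨1, ⟨u, hu, hone u⟩⟩
  · intro g y hy
    have : W.map (T g) ≤ W := by
      rw [hW, Submodule.map_span, Submodule.span_le]
      rintro _ ⟨_, ⟨S, ⟨h, rfl⟩, ⟨u, hu, rfl⟩⟩, rfl⟩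
      apply Submodule.subset_span
      refine Set.mem_iUnion.mpr ⟨g * h, ⟨u, hu, ?_⟩⟩
      rw [hmul]; rfl
    exact this ⟨y, hy, rfl⟩


end
end

section
/- The underlying space of the monoid L = L(ℝ^∞, ℝ^∞) of linear isometric self-embeddings of ℝ^∞ is contractible. -/
open scoped RealInnerProductSpace

noncomputable section

namespace Contr

/-- basis vector -/
def ee (k : ℕ) : Rinf := Finsupp.single k 1

lemma rinner_eq_sum (x y : Rinf) {s : Finset ℕ} (hs : x.support ⊆ s) :
    rinner x y = ∑ k ∈ s, x k * y k := by
  refine tsum_eq_sum fun b hb => ?_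
  have : x b = 0 := Finsupp.notMem_support_iff.1 fun h => hb (hs h)
  simp [this]

lemma rinner_comm (x y : Rinf) : rinner x y = rinner y x := by
  simp only [rinner, mul_comm]

lemma rinner_add_left (x y z : Rinf) :
    rinner (x + y) z = rinner x z + rinner y z := by
  have h1 : (x + y).support ⊆ x.support ∪ y.support := Finsupp.support_add
  rw [rinner_eq_sum (x + y) z h1, rinner_eq_sum x z Finset.subset_union_left,
    rinner_eq_sum y z Finset.subset_union_right, ← Finset.sum_add_distrib]
  refine Finset.sum_congr rfl fun k _ => ?_
  simp [Finsupp.add_apply, add_mul]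

lemma rinner_smul_left (c : ℝ) (x z : Rinf) :
    rinner (c • x) z = c * rinner x z := by
  have h1 : (c • x).support ⊆ x.support := Finsupp.support_smul
  rw [rinner_eq_sum (c • x) z h1, rinner_eq_sum x z (subset_refl _), Finset.mul_sum]
  refine Finset.sum_congr rfl fun k _ => ?_
  simp [Finsupp.smul_apply, mul_assoc]

lemma rinner_add_right (x y z : Rinf) :
    rinner z (x + y) = rinner z x + rinner z y := by
  rw [rinner_comm, rinner_add_left, rinner_comm x z, rinner_comm y z]

lemma rinner_smul_right (c : ℝ) (x z : Rinf) :
    rinner z (c • x) = c * rinner z x := by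
  rw [rinner_comm, rinner_smul_left, rinner_comm x z]

lemma rinner_ee (i j : ℕ) : rinner (ee i) (ee j) = if i = j then 1 else 0 := by
  have : (ee i).support ⊆ {i} := Finsupp.support_single_subset
  rw [rinner_eq_sum _ _ this, Finset.sum_singleton]
  simp only [ee, Finsupp.single_apply]
  by_cases h : i = j
  · simp [h]
  · have h' : ¬ j = i := fun h' => h h'.symm
    simp [h, h']

lemma rinner_sub_left (x y z : Rinf) :
    rinner (x - y) z = rinner x z - rinner y z := by
  have : x - y = x + (-1 : ℝ) • y := by rw [neg_one_smul]; abel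
  rw [this, rinner_add_left, rinner_smul_left]; ring

lemma rinner_sub_right (x y z : Rinf) :
    rinner z (x - y) = rinner z x - rinner z y := by
  rw [rinner_comm, rinner_sub_left, rinner_comm x z, rinner_comm y z]

lemma rinner_zero_left (z : Rinf) : rinner 0 z = 0 := by
  simp [rinner]

lemma rinner_finsetSum_left {α : Type*} (s : Finset α) (g : α → Rinf) (z : Rinf) :
    rinner (∑ i ∈ s, g i) z = ∑ i ∈ s, rinner (g i) z := by
  classical
  induction s using Finset.cons_induction with
  | empty => simp [rinner_zero_left]
  | cons a s ha ih => rw [Finset.sum_cons, rinner_add_left, ih, Finset.sum_cons]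

/-- images of an orthonormal family preserve `rinner`. -/
lemma rinner_total (v : ℕ → Rinf)
    (hv : ∀ i j, rinner (v i) (v j) = if i = j then 1 else 0) (x y : Rinf) :
    rinner (Finsupp.linearCombination ℝ v x) (Finsupp.linearCombination ℝ v y) = rinner x y := by
  classical
  rw [Finsupp.linearCombination_apply, Finsupp.linearCombination_apply, Finsupp.sum, Finsupp.sum,
    rinner_finsetSum_left]
  have inner_eval : ∀ i, rinner (v i) (∑ j ∈ y.support, y j • v j) = y i := by
    intro i
    rw [rinner_comm, rinner_finsetSum_left]
    have : ∀ j ∈ y.support, rinner (y j • v j) (v i) = if j = i then y j else 0 := by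
      intro j _
      rw [rinner_smul_left, hv j i]
      by_cases h : j = i <;> simp [h]
    rw [Finset.sum_congr rfl this, Finset.sum_ite_eq' y.support i (fun j => y j)]
    by_cases h : i ∈ y.support
    · simp [h]
    · simp [h, Finsupp.notMem_support_iff.1 h]
  have : ∀ i ∈ x.support, rinner (x i • v i) (∑ j ∈ y.support, y j • v j) = x i * y i := by
    intro i _
    rw [rinner_smul_left, inner_eval]
  rw [Finset.sum_congr rfl this, ← rinner_eq_sum x y (subset_refl _)]

/-! ### odd part -/

def oddPart : ℕ → ℕ
  | n =>
    if h : n ≤ 1 then n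
    else if n % 2 = 1 then n
    else
      have : n / 2 < n := Nat.div_lt_self (by omega) one_lt_two
      oddPart (n / 2)

lemma oddPart_of_odd {n : ℕ} (h : n % 2 = 1) : oddPart n = n := by
  rw [oddPart]
  split_ifs with h1 h2 <;> omega

lemma oddPart_of_even {n : ℕ} (h : n % 2 = 0) (h2 : 2 ≤ n) : oddPart n = oddPart (n / 2) := by
  rw [oddPart]
  split_ifs with h1 h3 <;> first | rfl | omega

lemma oddPart_zero : oddPart 0 = 0 := by rw [oddPart]; simp

lemma oddPart_odd {n : ℕ} (h : 1 ≤ n) : oddPart n % 2 = 1 := by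
  induction n using Nat.strong_induction_on with
  | _ n ih =>
    rcases Nat.even_or_odd n with he | ho
    · obtain ⟨k, hk⟩ := he
      have h2 : 2 ≤ n := by omega
      have hmod : n % 2 = 0 := by omega
      rw [oddPart_of_even hmod h2]
      have hpos : 1 ≤ n / 2 := by omega
      exact ih (n / 2) (Nat.div_lt_self (by omega) one_lt_two) hpos
    · rw [oddPart_of_odd (Nat.odd_iff.1 ho)]; exact Nat.odd_iff.1 ho

lemma oddPart_le {n : ℕ} : oddPart n ≤ n := by
  induction n using Nat.strong_induction_on with
  | _ n ih =>
    rcases Nat.eq_zero_or_pos n with h0 | h1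
    · subst h0; rw [oddPart_zero]
    rcases Nat.even_or_odd n with he | ho
    · obtain ⟨k, hk⟩ := he
      have h2 : 2 ≤ n := by omega
      have hmod : n % 2 = 0 := by omega
      rw [oddPart_of_even hmod h2]
      exact le_trans (ih (n / 2) (Nat.div_lt_self (by omega) one_lt_two)) (by omega)
    · rw [oddPart_of_odd (Nat.odd_iff.1 ho)]

lemma oddPart_pos {n : ℕ} (h : 1 ≤ n) : 1 ≤ oddPart n := by
  have := oddPart_odd h; omega

lemma oddPart_le_half {n : ℕ} (h : n % 2 = 0) (h2 : 2 ≤ n) : oddPart n ≤ n / 2 := by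
  rw [oddPart_of_even h h2]; exact oddPart_le

lemma oddPart_lt_double {x y : ℕ} (hxy : oddPart x = oddPart y) (hlt : x < y) (hx : 1 ≤ x) :
    2 * x ≤ y := by
  induction y using Nat.strong_induction_on generalizing x with
  | _ y ih =>
    rcases Nat.even_or_odd x with hex | hox
    · rcases Nat.even_or_odd y with hey | hoy
      · -- both even
        have hx2 : 2 ≤ x := by rcases hex with ⟨k, hk⟩; omega
        have hy2 : 2 ≤ y := by omega
        have hmx : x % 2 = 0 := by rcases hex with ⟨k, hk⟩; omega
        have hmy : y % 2 = 0 := by rcases hey with ⟨k, hk⟩; omega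
        have hparts : oddPart (x / 2) = oddPart (y / 2) := by
          rw [← oddPart_of_even hmx hx2, ← oddPart_of_even hmy hy2]; exact hxy
        have hlt' : x / 2 < y / 2 := by
          rcases hex with ⟨a, ha⟩; rcases hey with ⟨b, hb⟩; omega
        have := ih (y / 2) (Nat.div_lt_self (by omega) one_lt_two) hparts hlt' (by omega)
        rcases hex with ⟨a, ha⟩; rcases hey with ⟨b, hb⟩; omega
      · -- x even, y odd : impossible
        exfalso
        have h1 : oddPart x ≤ x / 2 := oddPart_le_half (by rcases hex with ⟨k,hk⟩; omega)
          (by rcases hex with ⟨k,hk⟩; omega)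
        rw [oddPart_of_odd (Nat.odd_iff.1 hoy)] at hxy
        have hx2 : x / 2 < x := Nat.div_lt_self (by omega) one_lt_two
        omega
    · -- x odd
      rw [oddPart_of_odd (Nat.odd_iff.1 hox)] at hxy
      rcases Nat.even_or_odd y with hey | hoy
      · have hy2 : 2 ≤ y := by omega
        have hyh : oddPart y ≤ y / 2 := oddPart_le_half (by rcases hey with ⟨k,hk⟩; omega) hy2
        rcases hey with ⟨k, hk⟩
        subst hk
        have : (2 * k) / 2 = k := by omega
        omega
      · rw [oddPart_of_odd (Nat.odd_iff.1 hoy)] at hxy; omega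

/-! ### stage progress functions -/

/-- progress of stage `n` (`n ≥ 1`) at time `t` : stage `n` runs on `[1-1/n, 1-1/(n+1)]`. -/
def prog (n : ℕ) (t : ℝ) : ℝ := max 0 (min 1 ((t - (1 - 1 / (n : ℝ))) * (n * (n + 1))))

lemma prog_nonneg (n : ℕ) (t : ℝ) : 0 ≤ prog n t := le_max_left _ _

lemma prog_le_one (n : ℕ) (t : ℝ) : prog n t ≤ 1 := by
  rw [prog, max_le_iff]
  exact ⟨zero_le_one, min_le_left _ _⟩

lemma prog_at_zero {n : ℕ} (h : 1 ≤ n) : prog n 0 = 0 := by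
  have hn : (1 : ℝ) ≤ (n : ℝ) := by exact_mod_cast h
  have h1 : (0 : ℝ) - (1 - 1 / (n : ℝ)) ≤ 0 := by
    have : 1 / (n : ℝ) ≤ 1 := by
      rw [div_le_one (by linarith)]; exact hn
    linarith
  have h2 : ((0 : ℝ) - (1 - 1 / (n : ℝ))) * (n * (n + 1)) ≤ 0 :=
    mul_nonpos_of_nonpos_of_nonneg h1 (by positivity)
  rw [prog, max_eq_left]
  exact le_trans (min_le_right _ _) h2

lemma prog_at_one {n : ℕ} (h : 1 ≤ n) : prog n 1 = 1 := by
  have hn : (0 : ℝ) < (n : ℝ) := by exact_mod_cast h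
  have h1 : (1 : ℝ) ≤ ((1 : ℝ) - (1 - 1 / (n : ℝ))) * (n * (n + 1)) := by
    have heq : ((1 : ℝ) - (1 - 1 / (n : ℝ))) * (n * (n + 1)) = (n : ℝ) + 1 := by
      field_simp
      ring
    rw [heq]; linarith
  rw [prog, min_eq_left h1]
  exact max_eq_right zero_le_one

lemma prog_eq_one {n : ℕ} {t : ℝ} (h : 1 ≤ n) (ht : 1 - 1 / ((n : ℝ) + 1) ≤ t) :
    prog n t = 1 := by
  have hn : (1 : ℝ) ≤ (n : ℝ) := by exact_mod_cast h
  have h1 : (1 : ℝ) ≤ (t - (1 - 1 / (n : ℝ))) * (n * (n + 1)) := by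
    have key : (1 - 1 / ((n:ℝ) + 1) - (1 - 1 / (n : ℝ))) * (n * (n + 1)) = 1 := by
      field_simp; ring
    have hmono : (1 - 1 / ((n:ℝ) + 1) - (1 - 1 / (n : ℝ))) * (n * (n + 1)) ≤
        (t - (1 - 1 / (n : ℝ))) * (n * (n + 1)) := by
      apply mul_le_mul_of_nonneg_right (by linarith) (by positivity)
    linarith
  rw [prog, min_eq_left h1, max_eq_right zero_le_one]

lemma lt_of_prog_pos {n : ℕ} {t : ℝ} (h : 1 ≤ n) (hp : 0 < prog n t) :
    1 - 1 / (n : ℝ) < t := by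
  by_contra hc
  push_neg at hc
  have h2 : (t - (1 - 1 / (n : ℝ))) * (n * (n + 1)) ≤ 0 :=
    mul_nonpos_of_nonpos_of_nonneg (by linarith) (by positivity)
  have : prog n t ≤ 0 := by
    rw [prog, max_le_iff]
    exact ⟨le_refl _, le_trans (min_le_right _ _) h2⟩
  linarith

/-- if a later stage has started, any earlier stage is finished. -/
lemma prog_earlier_eq_one {i j : ℕ} {t : ℝ} (hi : 1 ≤ i) (hij : i < j)
    (hp : 0 < prog j t) : prog i t = 1 := by
  have hj : 1 ≤ j := by omega
  have ht := lt_of_prog_pos hj hp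
  apply prog_eq_one hi
  have hij' : (i : ℝ) + 1 ≤ (j : ℝ) := by exact_mod_cast hij
  have hi' : (0:ℝ) < (i:ℝ) + 1 := by positivity
  have hj' : (0:ℝ) < (j:ℝ) := by linarith
  have : 1 / (j : ℝ) ≤ 1 / ((i:ℝ) + 1) := by
    apply one_div_le_one_div_of_le hi' hij'
  linarith




/-! ### the rotation path on basis vectors -/

def cs (n : ℕ) (t : ℝ) : ℝ := Real.cos (Real.pi / 2 * prog n t)
def sn (n : ℕ) (t : ℝ) : ℝ := Real.sin (Real.pi / 2 * prog n t)

lemma cs_sq_add_sn_sq (n : ℕ) (t : ℝ) : cs n t * cs n t + sn n t * sn n t = 1 := by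
  have := Real.sin_sq_add_cos_sq (Real.pi / 2 * prog n t)
  rw [cs, sn]; nlinarith [this]

lemma cs_of_prog_zero {n : ℕ} {t : ℝ} (h : prog n t = 0) : cs n t = 1 := by
  rw [cs, h]; simp

lemma sn_of_prog_zero {n : ℕ} {t : ℝ} (h : prog n t = 0) : sn n t = 0 := by
  rw [sn, h]; simp

lemma cs_of_prog_one {n : ℕ} {t : ℝ} (h : prog n t = 1) : cs n t = 0 := by
  rw [cs, h]; simp [Real.cos_pi_div_two]

lemma sn_of_prog_one {n : ℕ} {t : ℝ} (h : prog n t = 1) : sn n t = 1 := by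
  rw [sn, h]; simp [Real.sin_pi_div_two]

/-- either stage `j` has not started, or all earlier stages are done. -/
lemma kill {i j : ℕ} (hi : 1 ≤ i) (hij : i < j) (t : ℝ) :
    prog j t = 0 ∨ cs i t = 0 := by
  rcases eq_or_lt_of_le (prog_nonneg j t) with h | h
  · exact Or.inl h.symm
  · exact Or.inr (cs_of_prog_one (prog_earlier_eq_one hi hij h))

/-- the path through basis vector `m`. -/
def Pe (m : ℕ) (t : ℝ) : Rinf :=
  if m = 0 then ee 0
  else if m % 2 = 1 then cs m t • ee m + sn m t • ee (2 * m)
  else cs (m / 2) t • ee m -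
    sn (m / 2) t • (cs m t • ee (oddPart m) + sn m t • ee (2 * m))

lemma Pe_zero_def (t : ℝ) : Pe 0 t = ee 0 := by rw [Pe]; simp

lemma Pe_odd_def {m : ℕ} (h : m % 2 = 1) (t : ℝ) :
    Pe m t = cs m t • ee m + sn m t • ee (2 * m) := by
  rw [Pe]; rw [if_neg (by omega), if_pos h]

lemma Pe_even_def {m : ℕ} (h : m % 2 = 0) (h1 : 1 ≤ m) (t : ℝ) :
    Pe m t = cs (m / 2) t • ee m -
      sn (m / 2) t • (cs m t • ee (oddPart m) + sn m t • ee (2 * m)) := by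
  rw [Pe]; rw [if_neg (by omega), if_neg (by omega)]

theorem rinner_Pe_diag (m : ℕ) (t : ℝ) : rinner (Pe m t) (Pe m t) = 1 := by
  rcases Nat.eq_zero_or_pos m with h0 | h1
  · subst h0; rw [Pe_zero_def, rinner_ee]; simp
  rcases Nat.even_or_odd m with he | ho
  · have hm : m % 2 = 0 := by rcases he with ⟨k, hk⟩; omega
    have hm2 : 2 ≤ m := by omega
    have hu : oddPart m ≤ m / 2 := oddPart_le_half hm hm2
    have e1 : ¬ (m = oddPart m) := by omega
    have e2 : ¬ (m = 2 * m) := by omega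
    have e3 : ¬ (oddPart m = m) := fun h => e1 h.symm
    have e4 : ¬ (oddPart m = 2 * m) := by omega
    have e5 : ¬ (2 * m = m) := by omega
    have e6 : ¬ (2 * m = oddPart m) := fun h => e4 h.symm
    rw [Pe_even_def hm h1]
    simp only [rinner_sub_left, rinner_sub_right, rinner_add_left, rinner_add_right,
      rinner_smul_left, rinner_smul_right, rinner_ee, if_pos rfl, if_neg e1, if_neg e2,
      if_neg e3, if_neg e4, if_neg e5, if_neg e6, if_true]
    have h2 := cs_sq_add_sn_sq (m / 2) t
    have h3 := cs_sq_add_sn_sq m t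
    nlinarith [h2, h3]
  · have hm : m % 2 = 1 := Nat.odd_iff.1 ho
    have e2 : ¬ (m = 2 * m) := by omega
    have e5 : ¬ (2 * m = m) := by omega
    rw [Pe_odd_def hm]
    simp only [rinner_add_left, rinner_add_right, rinner_smul_left, rinner_smul_right,
      rinner_ee, if_pos rfl, if_neg e2, if_neg e5, if_true]
    have h3 := cs_sq_add_sn_sq m t
    nlinarith [h3]

lemma oddPart_two_mul {m : ℕ} (h : 1 ≤ m) : oddPart (2 * m) = oddPart m := by
  rw [oddPart_of_even (by omega) (by omega)]
  congr 1; omega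

theorem rinner_Pe_lt (t : ℝ) {m m' : ℕ} (hlt : m < m') : rinner (Pe m t) (Pe m' t) = 0 := by
  have h1' : 1 ≤ m' := by omega
  rcases Nat.even_or_odd m' with he' | ho'
  all_goals rcases Nat.eq_zero_or_pos m with h0 | h1
  -- m = 0, m' even
  · subst h0
    have hm' : m' % 2 = 0 := by rcases he' with ⟨k, hk⟩; omega
    have hu0 : 1 ≤ oddPart m' := oddPart_pos h1'
    have e1 : ¬ (0 = m') := by omega
    have e2 : ¬ (0 = oddPart m') := by omega
    have e3 : ¬ (0 = 2 * m') := by omega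
    rw [Pe_zero_def, Pe_even_def hm' h1']
    simp only [rinner_sub_right, rinner_add_right, rinner_smul_right, rinner_ee,
      if_neg e1, if_neg e2, if_neg e3]
    ring
  -- m ≥ 1, m' even
  · have hm' : m' % 2 = 0 := by rcases he' with ⟨k, hk⟩; omega
    have hu'odd : oddPart m' % 2 = 1 := oddPart_odd h1'
    have hu'le : oddPart m' ≤ m' / 2 := oddPart_le_half hm' (by omega)
    rcases Nat.even_or_odd m with he | ho
    · -- CASE D : both even
      have hm : m % 2 = 0 := by rcases he with ⟨k, hk⟩; omega
      have huodd : oddPart m % 2 = 1 := oddPart_odd h1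
      have hule : oddPart m ≤ m / 2 := oddPart_le_half hm (by omega)
      by_cases hD1 : m' = 2 * m
      · -- kill case (a)
        subst hD1
        have hn' : 2 * m / 2 = m := by omega
        have hu' : oddPart (2 * m) = oddPart m := oddPart_two_mul h1
        have e1 : ¬ (m = 2 * m) := by omega
        have e2 : ¬ (m = oddPart m) := by omega
        have e3 : ¬ (m = 2 * (2 * m)) := by omega
        have e4 : ¬ (oddPart m = 2 * m) := by omega
        have e5 : ¬ (oddPart m = 2 * (2 * m)) := by omega
        have e6 : ¬ (2 * m = oddPart m) := by omega
        have e7 : ¬ (2 * m = 2 * (2 * m)) := by omega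
        rw [Pe_even_def hm h1, Pe_even_def hm' h1', hn', hu']
        simp only [rinner_sub_left, rinner_sub_right, rinner_add_left, rinner_add_right,
          rinner_smul_left, rinner_smul_right, rinner_ee, if_neg e1, if_neg e2, if_neg e3,
          if_neg e4, if_neg e5, if_neg e6, if_neg e7, if_pos rfl, if_true]
        rcases kill h1 (show m < 2 * m by omega) t with hk | hk
        · rw [cs_of_prog_zero hk]; ring
        · rw [hk]; ring
      · by_cases hD2 : oddPart m' = oddPart m
        · -- kill case (b) : same odd part, m' > 2m
          have h2m : 2 * m < m' := by
            have := oddPart_lt_double (x := m) (y := m') (by omega) hlt h1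
            omega
          have hn'ev : (m' / 2) % 2 = 0 := by
            rcases Nat.even_or_odd (m' / 2) with hev | hod
            · rcases hev with ⟨k, hk⟩; omega
            · exfalso
              have : oddPart (m' / 2) = m' / 2 := oddPart_of_odd (Nat.odd_iff.1 hod)
              have h2 : oddPart m' = oddPart (m' / 2) := oddPart_of_even hm' (by omega)
              -- oddPart m' = m'/2 ⇒ oddPart m = m'/2; but oddPart m ≤ m/2 and 2m < m'
              omega
          have hmltn' : m < m' / 2 := by
            -- oddPart (m'/2) = oddPart m, m'/2 even ⇒ if m'/2 ≤ m then 2*(m'/2) ≤ m or =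
            have h2 : oddPart m' = oddPart (m' / 2) := oddPart_of_even hm' (by omega)
            rcases lt_trichotomy m (m' / 2) with h | h | h
            · exact h
            · exfalso; omega
            · exfalso
              have := oddPart_lt_double (x := m' / 2) (y := m)
                (by rw [← h2, hD2]) h (by omega)
              omega
          have e1 : ¬ (m = m') := by omega
          have e2 : ¬ (m = oddPart m') := by omega
          have e3 : ¬ (m = 2 * m') := by omega
          have e4 : ¬ (oddPart m = m') := by omega
          have e5 : ¬ (oddPart m = 2 * m') := by omega
          have e6 : ¬ (2 * m = m') := by omega
          have e7 : ¬ (2 * m = oddPart m) := by omega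
          have e8 : ¬ (2 * m = 2 * m') := by omega
          have e9 : ¬ (m = oddPart m) := by omega
          have e10 : ¬ (oddPart m = m) := by omega
          have e11 : ¬ (m * 2 = oddPart m) := by omega
          rw [Pe_even_def hm h1, Pe_even_def hm' h1', hD2]
          simp only [rinner_sub_left, rinner_sub_right, rinner_add_left, rinner_add_right,
            rinner_smul_left, rinner_smul_right, rinner_ee, if_neg e1, if_neg e2, if_neg e3,
            if_neg e4, if_neg e5, if_neg e6, if_neg e7, if_neg e8, if_neg e9, if_neg e10,
            if_neg e11, if_pos rfl, if_true]
          rcases kill h1 hmltn' t with hk | hk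
          · rw [sn_of_prog_zero hk]; ring
          · rw [hk]; ring
        · -- no shared indices
          have e1 : ¬ (m = m') := by omega
          have e2 : ¬ (m = oddPart m') := by omega
          have e3 : ¬ (m = 2 * m') := by
            intro h
            have : oddPart m = oddPart (2 * m') := by rw [h]
            rw [oddPart_two_mul h1'] at this
            exact hD2 this.symm
          have e4 : ¬ (oddPart m = m') := by have := oddPart_odd h1; omega
          have e5 : ¬ (oddPart m = oddPart m') := fun h => hD2 h.symm
          have e6 : ¬ (oddPart m = 2 * m') := by have := oddPart_odd h1; omega
          have e7 : ¬ (2 * m = m') := fun h => hD1 h.symm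
          have e8 : ¬ (2 * m = oddPart m') := by omega
          have e9 : ¬ (2 * m = 2 * m') := by omega
          rw [Pe_even_def hm h1, Pe_even_def hm' h1']
          simp only [rinner_sub_left, rinner_sub_right, rinner_add_left, rinner_add_right,
            rinner_smul_left, rinner_smul_right, rinner_ee, if_neg e1, if_neg e2, if_neg e3,
            if_neg e4, if_neg e5, if_neg e6, if_neg e7, if_neg e8, if_neg e9]
          ring
    · -- CASE B : m odd, m' even
      have hm : m % 2 = 1 := Nat.odd_iff.1 ho
      have hum : oddPart m = m := oddPart_of_odd hm
      by_cases hB1 : m' = 2 * m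
      · -- kill case
        subst hB1
        have hn' : 2 * m / 2 = m := by omega
        have hu' : oddPart (2 * m) = m := by rw [oddPart_two_mul h1, hum]
        have e1 : ¬ (m = 2 * m) := by omega
        have e2 : ¬ (m = 2 * (2 * m)) := by omega
        have e3 : ¬ (2 * m = m) := by omega
        have e4 : ¬ (2 * m = 2 * (2 * m)) := by omega
        rw [Pe_odd_def hm, Pe_even_def hm' h1', hn', hu']
        simp only [rinner_add_left, rinner_sub_right, rinner_add_right, rinner_smul_left,
          rinner_smul_right, rinner_ee, if_neg e1, if_neg e2, if_neg e3, if_neg e4,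
          if_pos rfl, if_true]
        rcases kill h1 (show m < 2 * m by omega) t with hk | hk
        · rw [cs_of_prog_zero hk]; ring
        · rw [hk]; ring
      · by_cases hB2 : oddPart m' = m
        · -- kill case : m = oddPart m', m' > 2m
          have h2m : 2 * m < m' := by
            have := oddPart_lt_double (x := m) (y := m') (by rw [hB2, hum]) hlt h1
            omega
          have hmltn' : m < m' / 2 := by
            have h2 : oddPart m' = oddPart (m' / 2) := oddPart_of_even hm' (by omega)
            rcases Nat.even_or_odd (m' / 2) with hev | hod
            · have : oddPart (m' / 2) ≤ m' / 2 / 2 :=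
                oddPart_le_half (by rcases hev with ⟨k, hk⟩; omega) (by omega)
              omega
            · exfalso
              have : oddPart (m' / 2) = m' / 2 := oddPart_of_odd (Nat.odd_iff.1 hod)
              omega
          have e1 : ¬ (m = m') := by omega
          have e2 : ¬ (m = 2 * m') := by omega
          have e3 : ¬ (2 * m = m') := by omega
          have e4 : ¬ (2 * m = m) := by omega
          have e5 : ¬ (2 * m = 2 * m') := by omega
          rw [Pe_odd_def hm, Pe_even_def hm' h1', hB2]
          simp only [rinner_add_left, rinner_sub_right, rinner_add_right, rinner_smul_left,
            rinner_smul_right, rinner_ee, if_neg e1, if_neg e2, if_neg e3, if_neg e4,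
            if_neg e5, if_pos rfl, if_true]
          rcases kill h1 hmltn' t with hk | hk
          · rw [sn_of_prog_zero hk]; ring
          · rw [hk]; ring
        · -- no shared indices
          have e1 : ¬ (m = m') := by omega
          have e2 : ¬ (m = oddPart m') := fun h => hB2 h.symm
          have e3 : ¬ (m = 2 * m') := by omega
          have e4 : ¬ (2 * m = m') := fun h => hB1 h.symm
          have e5 : ¬ (2 * m = oddPart m') := by omega
          have e6 : ¬ (2 * m = 2 * m') := by omega
          rw [Pe_odd_def hm, Pe_even_def hm' h1']
          simp only [rinner_add_left, rinner_sub_right, rinner_add_right, rinner_smul_left,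
            rinner_smul_right, rinner_ee, if_neg e1, if_neg e2, if_neg e3, if_neg e4,
            if_neg e5, if_neg e6]
          ring
  -- m = 0, m' odd
  · subst h0
    have hm' : m' % 2 = 1 := Nat.odd_iff.1 ho'
    have e1 : ¬ (0 = m') := by omega
    have e3 : ¬ (0 = 2 * m') := by omega
    rw [Pe_zero_def, Pe_odd_def hm']
    simp only [rinner_add_right, rinner_smul_right, rinner_ee, if_neg e1, if_neg e3]
    ring
  -- m ≥ 1, m' odd
  · have hm' : m' % 2 = 1 := Nat.odd_iff.1 ho'
    rcases Nat.even_or_odd m with he | ho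
    · -- CASE C : m even, m' odd : no shared indices
      have hm : m % 2 = 0 := by rcases he with ⟨k, hk⟩; omega
      have hule : oddPart m ≤ m / 2 := oddPart_le_half hm (by omega)
      have e1 : ¬ (m = m') := by omega
      have e2 : ¬ (m = 2 * m') := by omega
      have e3 : ¬ (oddPart m = m') := by omega
      have huodd : oddPart m % 2 = 1 := oddPart_odd h1
      have e4 : ¬ (oddPart m = 2 * m') := by omega
      have e5 : ¬ (2 * m = m') := by omega
      have e6 : ¬ (2 * m = 2 * m') := by omega
      rw [Pe_even_def hm h1, Pe_odd_def hm']
      simp only [rinner_sub_left, rinner_add_left, rinner_add_right, rinner_smul_left,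
        rinner_smul_right, rinner_ee, if_neg e1, if_neg e2, if_neg e3, if_neg e4,
        if_neg e5, if_neg e6]
      ring
    · -- CASE A : both odd : no shared indices
      have hm : m % 2 = 1 := Nat.odd_iff.1 ho
      have e1 : ¬ (m = m') := by omega
      have e2 : ¬ (m = 2 * m') := by omega
      have e3 : ¬ (2 * m = m') := by omega
      have e4 : ¬ (2 * m = 2 * m') := by omega
      rw [Pe_odd_def hm, Pe_odd_def hm']
      simp only [rinner_add_left, rinner_add_right, rinner_smul_left, rinner_smul_right,
        rinner_ee, if_neg e1, if_neg e2, if_neg e3, if_neg e4]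
      ring

theorem rinner_Pe (t : ℝ) (m m' : ℕ) :
    rinner (Pe m t) (Pe m' t) = if m = m' then 1 else 0 := by
  rcases lt_trichotomy m m' with h | h | h
  · rw [if_neg (by omega), rinner_Pe_lt t h]
  · subst h; rw [if_pos rfl, rinner_Pe_diag]
  · rw [if_neg (by omega), rinner_comm, rinner_Pe_lt t h]

/-! ### the path of linear maps -/

def Pl (s : ℝ) : Rinf →ₗ[ℝ] Rinf := Finsupp.linearCombination ℝ (fun m => Pe m s)

def Bl : Rinf →ₗ[ℝ] Rinf := Finsupp.linearCombination ℝ (fun m => ee (2 * m + 1))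

lemma rinner_Pl (s : ℝ) (x y : Rinf) : rinner (Pl s x) (Pl s y) = rinner x y :=
  rinner_total _ (fun i j => rinner_Pe s i j) x y

lemma rinner_Bl (x y : Rinf) : rinner (Bl x) (Bl y) = rinner x y := by
  refine rinner_total _ (fun i j => ?_) x y
  rw [rinner_ee]
  by_cases h : i = j
  · simp [h]
  · rw [if_neg (by omega), if_neg h]

lemma total_ee (x : Rinf) : Finsupp.linearCombination ℝ ee x = x := by
  ext k
  rw [Finsupp.linearCombination_apply, Finsupp.sum_apply, Finsupp.sum]
  rw [Finset.sum_congr rfl (fun i (_ : i ∈ x.support) =>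
    (show (x i • ee i) k = if i = k then x i else 0 by
      simp only [Finsupp.smul_apply, ee, Finsupp.single_apply, smul_eq_mul]
      by_cases h : i = k <;> simp [h]))]
  rw [Finset.sum_ite_eq' x.support k (fun i => x i)]
  by_cases h : k ∈ x.support
  · simp [h]
  · simp [h, Finsupp.notMem_support_iff.1 h]

lemma Pe_at_zero (m : ℕ) : Pe m 0 = ee m := by
  rcases Nat.eq_zero_or_pos m with h0 | h1
  · subst h0; exact Pe_zero_def 0
  rcases Nat.even_or_odd m with he | ho
  · have hm : m % 2 = 0 := by rcases he with ⟨k, hk⟩; omega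
    rw [Pe_even_def hm h1, cs_of_prog_zero (prog_at_zero (by omega)),
      sn_of_prog_zero (prog_at_zero (by omega))]
    simp
  · have hm : m % 2 = 1 := Nat.odd_iff.1 ho
    rw [Pe_odd_def hm, cs_of_prog_zero (prog_at_zero h1), sn_of_prog_zero (prog_at_zero h1)]
    simp

lemma Pl_at_zero (x : Rinf) : Pl 0 x = x := by
  rw [Pl]
  have : (fun m => Pe m 0) = ee := funext fun m => Pe_at_zero m
  rw [this, total_ee]

lemma Pe_one_odd_coord (m k : ℕ) (hk : k % 2 = 1) : Pe m 1 k = 0 := by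
  rcases Nat.eq_zero_or_pos m with h0 | h1
  · subst h0; rw [Pe_zero_def]; simp [ee, Finsupp.single_apply]; omega
  rcases Nat.even_or_odd m with he | ho
  · have hm : m % 2 = 0 := by rcases he with ⟨k', hk'⟩; omega
    rw [Pe_even_def hm h1, cs_of_prog_one (prog_at_one (by omega)),
      cs_of_prog_one (prog_at_one h1)]
    simp [ee, Finsupp.single_apply]
    intro h; omega
  · have hm : m % 2 = 1 := Nat.odd_iff.1 ho
    rw [Pe_odd_def hm, cs_of_prog_one (prog_at_one h1)]
    simp [ee, Finsupp.single_apply]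
    intro h; omega

lemma Pl_one_odd_coord (x : Rinf) (k : ℕ) (hk : k % 2 = 1) : Pl 1 x k = 0 := by
  rw [Pl, Finsupp.linearCombination_apply, Finsupp.sum_apply]
  rw [Finsupp.sum]
  refine Finset.sum_eq_zero fun i _ => ?_
  rw [Finsupp.smul_apply, Pe_one_odd_coord i k hk, smul_zero]

lemma Bl_even_coord (x : Rinf) (k : ℕ) (hk : k % 2 = 0) : Bl x k = 0 := by
  rw [Bl, Finsupp.linearCombination_apply, Finsupp.sum_apply]
  rw [Finsupp.sum]
  refine Finset.sum_eq_zero fun i _ => ?_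
  rw [Finsupp.smul_apply]
  have : ee (2 * i + 1) k = 0 := by
    simp [ee, Finsupp.single_apply]
    omega
  rw [this, smul_zero]

lemma rinner_eq_zero_of (x y : Rinf) (h : ∀ k, x k * y k = 0) : rinner x y = 0 := by
  rw [rinner]
  have : (fun k => x k * y k) = fun _ => 0 := funext h
  rw [this, tsum_zero]

lemma rinner_Pl_Bl (x y : Rinf) : rinner (Pl 1 x) (Bl y) = 0 := by
  refine rinner_eq_zero_of _ _ fun k => ?_
  rcases Nat.even_or_odd k with he | ho
  · rw [Bl_even_coord y k (by rcases he with ⟨j, hj⟩; omega), mul_zero]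
  · rw [Pl_one_odd_coord x k (Nat.odd_iff.1 ho), zero_mul]

/-! ### the homotopy formula -/

def rho (t : ℝ) : ℝ := max 0 (min 1 (2 * t))
def gam (t : ℝ) : ℝ := Real.pi / 2 * max 0 (min 1 (2 * t - 1))

def Theta (t : ℝ) (x y : Rinf) : Rinf :=
  Real.cos (gam t) • Pl (rho t) y + Real.sin (gam t) • Bl x

lemma gam_of_le (t : ℝ) (h : t ≤ 1 / 2) : gam t = 0 := by
  rw [gam]
  have : min 1 (2 * t - 1) ≤ 0 := le_trans (min_le_right _ _) (by linarith)
  rw [max_eq_left this, mul_zero]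

lemma rho_of_ge (t : ℝ) (h : 1 / 2 ≤ t) : rho t = 1 := by
  rw [rho, min_eq_left (by linarith), max_eq_right (by linarith)]

lemma rho_at_zero : rho 0 = 0 := by rw [rho]; norm_num
lemma gam_at_one : gam 1 = Real.pi / 2 := by rw [gam]; norm_num

lemma rinner_Bl_Pl (x y : Rinf) : rinner (Bl x) (Pl 1 y) = 0 := by
  rw [rinner_comm, rinner_Pl_Bl]

lemma rinner_Theta (t : ℝ) (a b : Rinf) {f : Rinf → Rinf}
    (hf : ∀ x y, rinner (f x) (f y) = rinner x y) :
    rinner (Theta t a (f a)) (Theta t b (f b)) = rinner a b := by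
  rcases le_total t (1 / 2) with h | h
  · rw [Theta, Theta, gam_of_le t h]
    simp only [Real.cos_zero, Real.sin_zero, one_smul, zero_smul, add_zero]
    rw [rinner_Pl, hf]
  · rw [Theta, Theta, rho_of_ge t h]
    simp only [rinner_add_left, rinner_add_right, rinner_smul_left, rinner_smul_right,
      rinner_Pl, rinner_Bl, rinner_Pl_Bl, rinner_Bl_Pl, hf]
    have hcs := Real.sin_sq_add_cos_sq (gam t)
    linear_combination rinner a b * hcs

/-! ### topology of Rinf -/

abbrev E (n : ℕ) := EuclideanSpace ℝ (Fin n)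

lemma inclR_apply (n : ℕ) (x : E n) (k : ℕ) :
    inclR n x k = if h : k < n then x ⟨k, h⟩ else 0 := rfl

lemma isOpen_iff_stages {S : Set Rinf} : IsOpen S ↔ ∀ n, IsOpen (⇑(inclR n) ⁻¹' S) :=
  isOpen_iSup_iff.trans (forall_congr' fun _ => isOpen_coinduced)

lemma continuous_inclR (n : ℕ) : Continuous (inclR n) :=
  continuous_iSup_rng (i := n) continuous_coinduced_rng

lemma continuous_from_Rinf {Z : Type*} [TopologicalSpace Z] {g : Rinf → Z}
    (h : ∀ n, Continuous fun x : E n => g (inclR n x)) : Continuous g := by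
  rw [continuous_iSup_dom]
  intro n
  rw [continuous_coinduced_dom]
  exact h n

lemma continuous_coordE {n : ℕ} (i : Fin n) : Continuous fun x : E n => x i := by
  exact (continuous_apply i).comp (PiLp.continuous_ofLp 2 (fun _ : Fin n => ℝ))

lemma continuous_into_Rinf {Z : Type*} [TopologicalSpace Z] (M : ℕ) (g : Z → Rinf)
    (h0 : ∀ z k, M ≤ k → g z k = 0) (hc : ∀ k, Continuous fun z => g z k) :
    Continuous g := by
  have key : g = fun z => inclR M (WithLp.toLp 2 (fun i : Fin M => g z i : Fin M → ℝ) : E M) := by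
    funext z
    ext k
    rw [inclR_apply]
    by_cases h : k < M
    · simp [h]
    · simp [h, h0 z k (by omega)]
  rw [key]
  refine (continuous_inclR M).comp ?_
  refine Continuous.comp (PiLp.continuous_toLp 2 (fun _ : Fin M => ℝ)) ?_
  exact continuous_pi fun i => hc i

lemma continuous_coordRinf (k : ℕ) : Continuous fun x : Rinf => x k := by
  refine continuous_from_Rinf fun n => ?_
  simp only [inclR_apply]
  by_cases h : k < n
  · simp only [h, dif_pos]
    exact continuous_coordE ⟨k, h⟩
  · simp only [h, dif_neg, not_false_iff]
    exact continuous_const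

instance Rinf_t2 : T2Space Rinf := by
  constructor
  intro x y hxy
  have hex : ∃ k, x k ≠ y k := by
    by_contra h
    push_neg at h
    exact hxy (Finsupp.ext h)
  obtain ⟨k, hk⟩ := hex
  obtain ⟨u, v, hu, hv, hxu, hyv, huv⟩ := t2_separation hk
  exact ⟨_, _, hu.preimage (continuous_coordRinf k), hv.preimage (continuous_coordRinf k),
    hxu, hyv, huv.preimage _⟩

/-! ### inclusion maps between stages -/

def Jmn (m n : ℕ) : E m →ₗ[ℝ] E n where
  toFun x := WithLp.toLp 2 (fun i : Fin n => if h : (i : ℕ) < m then x ⟨i, h⟩ else 0 : Fin n → ℝ)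
  map_add' x y := by
    ext i
    by_cases h : (i : ℕ) < m <;> simp [h, PiLp.add_apply]
  map_smul' c x := by
    ext i
    by_cases h : (i : ℕ) < m <;> simp [h, PiLp.smul_apply]

lemma Jmn_apply (m n : ℕ) (x : E m) (i : Fin n) :
    Jmn m n x i = if h : (i : ℕ) < m then x ⟨i, h⟩ else 0 := rfl

lemma continuous_Jmn (m n : ℕ) : Continuous (Jmn m n) :=
  (Jmn m n).continuous_of_finiteDimensional

lemma J_incl {m n : ℕ} (h : m ≤ n) (x : E m) : inclR n (Jmn m n x) = inclR m x := by
  ext k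
  rw [inclR_apply, inclR_apply]
  by_cases h1 : k < m
  · rw [dif_pos (by omega), dif_pos h1, Jmn_apply, dif_pos h1]
  · by_cases h2 : k < n
    · rw [dif_pos h2, dif_neg h1, Jmn_apply, dif_neg h1]
    · rw [dif_neg h2, dif_neg h1]

lemma inclR_injective (n : ℕ) : Function.Injective (inclR n) := by
  intro x y hxy
  ext i
  have := congrArg (fun z : Rinf => z (i : ℕ)) hxy
  simpa [inclR_apply, i.2] using this

lemma preimage_incl_image {m n : ℕ} (h : m ≤ n) (S : Set (E n)) :
    ⇑(inclR m) ⁻¹' (⇑(inclR n) '' S) = ⇑(Jmn m n) ⁻¹' S := by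
  ext x
  constructor
  · rintro ⟨s, hs, hxs⟩
    have : inclR n (Jmn m n x) = inclR n s := by rw [J_incl h]; exact hxs.symm
    have := inclR_injective n this
    simpa [this] using hs
  · intro hx
    exact ⟨Jmn m n x, hx, J_incl h x⟩

lemma trunc_eq (x : Rinf) (N : ℕ) (h : ∀ k, N ≤ k → x k = 0) :
    inclR N (WithLp.toLp 2 (fun i : Fin N => x i : Fin N → ℝ) : E N) = x := by
  ext k
  rw [inclR_apply]
  by_cases h1 : k < N
  · rw [dif_pos h1]
  · rw [dif_neg h1, h k (by omega)]

lemma support_bound (x : Rinf) (k : ℕ) (h : x.support.sup id + 1 ≤ k) : x k = 0 := by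
  by_contra hc
  have : k ∈ x.support := Finsupp.mem_support_iff.2 hc
  have := Finset.le_sup (f := id) this
  simp only [id] at this
  omega

/-! ### the key colimit-product interchange lemma -/

theorem isOpen_of_stages {W : Set (ℝ × Rinf × Rinf)}
    (h : ∀ n, IsOpen {q : ℝ × E n × E n |
      ((q.1, inclR n q.2.1, inclR n q.2.2) : ℝ × Rinf × Rinf) ∈ W}) :
    IsOpen W := by
  rw [isOpen_iff_mem_nhds]
  rintro ⟨z₀, x₀, y₀⟩ hp
  set N := max (x₀.support.sup id + 1) (y₀.support.sup id + 1) with hN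
  set x' : E N := (WithLp.toLp 2 (fun i : Fin N => x₀ i : Fin N → ℝ) : E N) with hx'
  set y' : E N := (WithLp.toLp 2 (fun i : Fin N => y₀ i : Fin N → ℝ) : E N) with hy'
  have hxeq : inclR N x' = x₀ := trunc_eq x₀ N fun k hk => support_bound x₀ k (by omega)
  have hyeq : inclR N y' = y₀ := trunc_eq y₀ N fun k hk => support_bound y₀ k (by omega)
  have hmem : ((z₀, (x', y')) : ℝ × E N × E N) ∈ {q : ℝ × E N × E N |
      ((q.1, inclR N q.2.1, inclR N q.2.2) : ℝ × Rinf × Rinf) ∈ W} := by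
    show ((z₀, inclR N x', inclR N y') : ℝ × Rinf × Rinf) ∈ W
    rw [hxeq, hyeq]; exact hp
  obtain ⟨A, BC, hA, hBC, hzA, hxyBC, hsub⟩ := isOpen_prod_iff.1 (h N) z₀ (x', y') hmem
  obtain ⟨B, C, hB, hC, hxB, hyC, hsub2⟩ := isOpen_prod_iff.1 hBC x' y' hxyBC
  obtain ⟨Cz, hCzc, hzint, hCzA⟩ := exists_compact_subset hA hzA
  obtain ⟨KB, hKBc, hxKB, hKBB⟩ := exists_compact_subset hB hxB
  obtain ⟨KC, hKCc, hyKC, hKCC⟩ := exists_compact_subset hC hyC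
  -- invariant
  let Inv : (j : ℕ) → Set (E (N + j)) × Set (E (N + j)) → Prop := fun j UV =>
    IsOpen UV.1 ∧ IsOpen UV.2 ∧ IsCompact (closure UV.1) ∧ IsCompact (closure UV.2) ∧
      ∀ z ∈ Cz, ∀ a ∈ closure UV.1, ∀ b ∈ closure UV.2,
        ((z, inclR (N + j) a, inclR (N + j) b) : ℝ × Rinf × Rinf) ∈ W
  let Q : ℕ → Type := fun j => {UV : Set (E (N + j)) × Set (E (N + j)) // Inv j UV}
  -- base
  have invBase : Inv 0 (interior KB, interior KC) := by
    refine ⟨isOpen_interior, isOpen_interior, ?_, ?_, ?_⟩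
    · exact hKBc.of_isClosed_subset isClosed_closure
        (closure_minimal interior_subset hKBc.isClosed)
    · exact hKCc.of_isClosed_subset isClosed_closure
        (closure_minimal interior_subset hKCc.isClosed)
    · intro z hz a ha b hb
      have haB : a ∈ B := hKBB (closure_minimal interior_subset hKBc.isClosed ha)
      have hbC : b ∈ C := hKCC (closure_minimal interior_subset hKCc.isClosed hb)
      exact hsub (show ((z, (a, b)) : ℝ × E N × E N) ∈ A ×ˢ BC from
        Set.mem_prod.2 ⟨hCzA hz, hsub2 (show ((a, b) : E N × E N) ∈ B ×ˢ C from
          Set.mem_prod.2 ⟨haB, hbC⟩)⟩)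
  let base0 : Q 0 := ⟨(interior KB, interior KC), invBase⟩
  -- step
  have stepEx : ∀ (j : ℕ) (p : Q j), ∃ UV' : Set (E (N + j + 1)) × Set (E (N + j + 1)),
      Inv (j + 1) UV' ∧ ⇑(Jmn (N + j) (N + j + 1)) '' closure p.val.1 ⊆ UV'.1 ∧
        ⇑(Jmn (N + j) (N + j + 1)) '' closure p.val.2 ⊆ UV'.2 := by
    intro j p
    obtain ⟨hU, hV, hcU, hcV, hinv⟩ := p.prop
    set A' := ⇑(Jmn (N + j) (N + j + 1)) '' closure p.val.1 with hA'
    set B' := ⇑(Jmn (N + j) (N + j + 1)) '' closure p.val.2 with hB'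
    have hA'c : IsCompact A' := hcU.image (continuous_Jmn _ _)
    have hB'c : IsCompact B' := hcV.image (continuous_Jmn _ _)
    have hsubW : Cz ×ˢ (A' ×ˢ B') ⊆ {q : ℝ × E (N + j + 1) × E (N + j + 1) |
        ((q.1, inclR (N + j + 1) q.2.1, inclR (N + j + 1) q.2.2) : ℝ × Rinf × Rinf) ∈ W} := by
      rintro ⟨z, a, b⟩ ⟨hz, ha, hb⟩
      obtain ⟨a₀, ha₀, rfl⟩ := ha
      obtain ⟨b₀, hb₀, rfl⟩ := hb
      show ((z, inclR (N + j + 1) _, inclR (N + j + 1) _) : ℝ × Rinf × Rinf) ∈ W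
      rw [J_incl (by omega), J_incl (by omega)]
      exact hinv z hz a₀ ha₀ b₀ hb₀
    obtain ⟨u, v, hu, hv, hCzu, hABv, huv⟩ :=
      generalized_tube_lemma hCzc (hA'c.prod hB'c) (h (N + j + 1)) hsubW
    obtain ⟨OA, OB, hOA, hOB, hA'OA, hB'OB, hOAB⟩ :=
      generalized_tube_lemma hA'c hB'c hv hABv
    obtain ⟨LA, hLAc, hA'LA, hLAOA⟩ := exists_compact_between hA'c hOA hA'OA
    obtain ⟨LB, hLBc, hB'LB, hLBOB⟩ := exists_compact_between hB'c hOB hB'OB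
    refine ⟨(interior LA, interior LB), ⟨isOpen_interior, isOpen_interior, ?_, ?_, ?_⟩,
      hA'LA, hB'LB⟩
    · exact hLAc.of_isClosed_subset isClosed_closure
        (closure_minimal interior_subset hLAc.isClosed)
    · exact hLBc.of_isClosed_subset isClosed_closure
        (closure_minimal interior_subset hLBc.isClosed)
    · intro z hz a ha b hb
      have haOA : a ∈ OA := hLAOA (closure_minimal interior_subset hLAc.isClosed ha)
      have hbOB : b ∈ OB := hLBOB (closure_minimal interior_subset hLBc.isClosed hb)
      exact huv (show ((z, (a, b)) : ℝ × E (N + j + 1) × E (N + j + 1)) ∈ u ×ˢ v from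
        Set.mem_prod.2 ⟨hCzu hz, hOAB (show ((a, b) : E (N + j + 1) × E (N + j + 1)) ∈ OA ×ˢ OB
          from Set.mem_prod.2 ⟨haOA, hbOB⟩)⟩)
  let stepFn : ∀ (j : ℕ) (p : Q j),
      {q : Q (j + 1) // ⇑(Jmn (N + j) (N + j + 1)) '' closure p.val.1 ⊆ q.val.1 ∧
        ⇑(Jmn (N + j) (N + j + 1)) '' closure p.val.2 ⊆ q.val.2} := fun j p =>
    ⟨⟨(stepEx j p).choose, (stepEx j p).choose_spec.1⟩, (stepEx j p).choose_spec.2.1,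
      (stepEx j p).choose_spec.2.2⟩
  let seq : ∀ j, Q j := fun j => Nat.rec base0 (fun j p => (stepFn j p).val) j
  have chain : ∀ j, ⇑(Jmn (N + j) (N + j + 1)) '' closure (seq j).val.1 ⊆ (seq (j + 1)).val.1 ∧
      ⇑(Jmn (N + j) (N + j + 1)) '' closure (seq j).val.2 ⊆ (seq (j + 1)).val.2 := fun j =>
    (stepFn j (seq j)).prop
  -- the unions
  let img1 : ℕ → Set Rinf := fun j => ⇑(inclR (N + j)) '' (seq j).val.1
  let img2 : ℕ → Set Rinf := fun j => ⇑(inclR (N + j)) '' (seq j).val.2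
  have mono1 : ∀ j, img1 j ⊆ img1 (j + 1) := by
    rintro j _ ⟨a, ha, rfl⟩
    exact ⟨Jmn (N + j) (N + j + 1) a, (chain j).1 ⟨a, subset_closure ha, rfl⟩,
      J_incl (by omega) a⟩
  have mono2 : ∀ j, img2 j ⊆ img2 (j + 1) := by
    rintro j _ ⟨a, ha, rfl⟩
    exact ⟨Jmn (N + j) (N + j + 1) a, (chain j).2 ⟨a, subset_closure ha, rfl⟩,
      J_incl (by omega) a⟩
  have mono1' : ∀ j k, j ≤ k → img1 j ⊆ img1 k := by
    intro j k hjk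
    induction k, hjk using Nat.le_induction with
    | base => exact subset_refl _
    | succ k hjk ih => exact ih.trans (mono1 k)
  have mono2' : ∀ j k, j ≤ k → img2 j ⊆ img2 k := by
    intro j k hjk
    induction k, hjk using Nat.le_induction with
    | base => exact subset_refl _
    | succ k hjk ih => exact ih.trans (mono2 k)
  let UU : Set Rinf := ⋃ j, img1 j
  let VV : Set Rinf := ⋃ j, img2 j
  have hUUopen : IsOpen UU := by
    rw [isOpen_iff_stages]
    intro m
    have hre : UU = ⋃ j, img1 (j + m) := by
      apply Set.Subset.antisymm
      · exact Set.iUnion_subset fun j => (mono1' j (j + m) (by omega)).trans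
          (Set.subset_iUnion (fun j => img1 (j + m)) j)
      · exact Set.iUnion_subset fun j => Set.subset_iUnion img1 (j + m)
    rw [hre, Set.preimage_iUnion]
    refine isOpen_iUnion fun j => ?_
    rw [show img1 (j + m) = ⇑(inclR (N + (j + m))) '' (seq (j + m)).val.1 from rfl,
      preimage_incl_image (by omega)]
    exact ((seq (j + m)).prop.1).preimage (continuous_Jmn _ _)
  have hVVopen : IsOpen VV := by
    rw [isOpen_iff_stages]
    intro m
    have hre : VV = ⋃ j, img2 (j + m) := by
      apply Set.Subset.antisymm
      · exact Set.iUnion_subset fun j => (mono2' j (j + m) (by omega)).trans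
          (Set.subset_iUnion (fun j => img2 (j + m)) j)
      · exact Set.iUnion_subset fun j => Set.subset_iUnion img2 (j + m)
    rw [hre, Set.preimage_iUnion]
    refine isOpen_iUnion fun j => ?_
    rw [show img2 (j + m) = ⇑(inclR (N + (j + m))) '' (seq (j + m)).val.2 from rfl,
      preimage_incl_image (by omega)]
    exact ((seq (j + m)).prop.2.1).preimage (continuous_Jmn _ _)
  have hxUU : x₀ ∈ UU := Set.mem_iUnion.2 ⟨0, ⟨x', hxKB, hxeq⟩⟩
  have hyVV : y₀ ∈ VV := Set.mem_iUnion.2 ⟨0, ⟨y', hyKC, hyeq⟩⟩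
  refine Filter.mem_of_superset ((isOpen_interior.prod (hUUopen.prod hVVopen)).mem_nhds
    (Set.mem_prod.2 ⟨hzint, Set.mem_prod.2 ⟨hxUU, hyVV⟩⟩)) ?_
  rintro ⟨z, x, y⟩ hq
  simp only [Set.mem_prod] at hq
  obtain ⟨hz, hx, hy⟩ := hq
  obtain ⟨j₁, hj₁⟩ := Set.mem_iUnion.1 hx
  obtain ⟨j₂, hj₂⟩ := Set.mem_iUnion.1 hy
  have hx' := mono1' j₁ (max j₁ j₂) (le_max_left _ _) hj₁
  have hy' := mono2' j₂ (max j₁ j₂) (le_max_right _ _) hj₂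
  obtain ⟨a, ha, rfl⟩ := hx'
  obtain ⟨b, hb, rfl⟩ := hy'
  exact (seq (max j₁ j₂)).prop.2.2.2.2 z (interior_subset hz) a (subset_closure ha)
    b (subset_closure hb)

/-! ### continuity of Theta -/

lemma continuous_prog (n : ℕ) : Continuous (prog n) := by
  unfold prog; fun_prop

lemma continuous_cs (n : ℕ) : Continuous (cs n) := by
  unfold cs
  exact Real.continuous_cos.comp (continuous_const.mul (continuous_prog n))

lemma continuous_sn (n : ℕ) : Continuous (sn n) := by
  unfold sn
  exact Real.continuous_sin.comp (continuous_const.mul (continuous_prog n))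

lemma ee_apply (i k : ℕ) : ee i k = if i = k then 1 else 0 := by
  simp [ee, Finsupp.single_apply]

lemma continuous_Pe_coord (m k : ℕ) : Continuous fun s => Pe m s k := by
  rcases Nat.eq_zero_or_pos m with h0 | h1
  · subst h0
    simp only [Pe_zero_def]
    exact continuous_const
  rcases Nat.even_or_odd m with he | ho
  · have hm : m % 2 = 0 := by rcases he with ⟨j, hj⟩; omega
    have : (fun s => Pe m s k) = fun s =>
        cs (m / 2) s * ee m k - sn (m / 2) s * (cs m s * ee (oddPart m) k + sn m s * ee (2 * m) k) := by
      funext s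
      rw [Pe_even_def hm h1]
      simp [Finsupp.sub_apply, Finsupp.add_apply, Finsupp.smul_apply]
      ring
    rw [this]
    exact ((continuous_cs _).mul continuous_const).sub ((continuous_sn _).mul
      (((continuous_cs _).mul continuous_const).add ((continuous_sn _).mul continuous_const)))
  · have hm : m % 2 = 1 := Nat.odd_iff.1 ho
    have : (fun s => Pe m s k) = fun s => cs m s * ee m k + sn m s * ee (2 * m) k := by
      funext s
      rw [Pe_odd_def hm]
      simp [Finsupp.add_apply, Finsupp.smul_apply]
    rw [this]
    exact ((continuous_cs _).mul continuous_const).add ((continuous_sn _).mul continuous_const)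

lemma Pe_coord_zero (m k : ℕ) (s : ℝ) (h : 2 * m + 1 ≤ k) : Pe m s k = 0 := by
  rcases Nat.eq_zero_or_pos m with h0 | h1
  · subst h0; rw [Pe_zero_def, ee_apply, if_neg (by omega)]
  rcases Nat.even_or_odd m with he | ho
  · have hm : m % 2 = 0 := by rcases he with ⟨j, hj⟩; omega
    have hu : oddPart m ≤ m := oddPart_le
    rw [Pe_even_def hm h1]
    simp only [Finsupp.sub_apply, Finsupp.add_apply, Finsupp.smul_apply, smul_eq_mul]
    rw [ee_apply, ee_apply, ee_apply, if_neg (by omega), if_neg (by omega), if_neg (by omega)]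
    ring
  · have hm : m % 2 = 1 := Nat.odd_iff.1 ho
    rw [Pe_odd_def hm]
    simp only [Finsupp.add_apply, Finsupp.smul_apply, smul_eq_mul]
    rw [ee_apply, ee_apply, if_neg (by omega), if_neg (by omega)]
    ring

lemma inclR_eq_sum (n : ℕ) (x : E n) : inclR n x = ∑ i : Fin n, x i • ee (i : ℕ) := by
  ext k
  rw [inclR_apply, Finsupp.finset_sum_apply]
  by_cases h : k < n
  · rw [dif_pos h]
    rw [Finset.sum_eq_single_of_mem (⟨k, h⟩ : Fin n) (Finset.mem_univ _)]
    · rw [Finsupp.smul_apply, ee_apply, if_pos rfl, smul_eq_mul, mul_one]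
    · intro i _ hne
      rw [Finsupp.smul_apply, ee_apply, if_neg (fun hik => hne (Fin.ext hik)), smul_zero]
  · rw [dif_neg h]
    refine (Finset.sum_eq_zero fun i _ => ?_).symm
    rw [Finsupp.smul_apply, ee_apply, if_neg (by omega), smul_zero]

lemma Pl_ee (s : ℝ) (i : ℕ) : Pl s (ee i) = Pe i s := by
  rw [Pl, ee, Finsupp.linearCombination_single, one_smul]

lemma Bl_ee (i : ℕ) : Bl (ee i) = ee (2 * i + 1) := by
  rw [Bl, ee, Finsupp.linearCombination_single, one_smul]

lemma Pl_incl (s : ℝ) (n : ℕ) (y : E n) :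
    Pl s (inclR n y) = ∑ i : Fin n, y i • Pe (i : ℕ) s := by
  rw [inclR_eq_sum, map_sum]
  exact Finset.sum_congr rfl fun i _ => by rw [map_smul, Pl_ee]

lemma Bl_incl (n : ℕ) (x : E n) :
    Bl (inclR n x) = ∑ i : Fin n, x i • ee (2 * (i : ℕ) + 1) := by
  rw [inclR_eq_sum, map_sum]
  exact Finset.sum_congr rfl fun i _ => by rw [map_smul, Bl_ee]

lemma Theta_stage_coord (n : ℕ) (t : ℝ) (x y : E n) (k : ℕ) :
    Theta t (inclR n x) (inclR n y) k =
      Real.cos (gam t) * (∑ i : Fin n, y i * Pe (i : ℕ) (rho t) k) +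
        Real.sin (gam t) * (∑ i : Fin n, x i * ee (2 * (i : ℕ) + 1) k) := by
  rw [Theta, Finsupp.add_apply, Finsupp.smul_apply, Finsupp.smul_apply, Pl_incl, Bl_incl,
    Finsupp.finset_sum_apply, Finsupp.finset_sum_apply, smul_eq_mul, smul_eq_mul]
  simp only [Finsupp.smul_apply, smul_eq_mul]

lemma continuous_rho : Continuous rho := by unfold rho; fun_prop
lemma continuous_gam : Continuous gam := by unfold gam; fun_prop

lemma continuous_Theta_stage (n : ℕ) :
    Continuous (fun q : ℝ × E n × E n => Theta q.1 (inclR n q.2.1) (inclR n q.2.2)) := by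
  apply continuous_into_Rinf (2 * n + 2)
  · intro q k hk
    rw [Theta_stage_coord]
    have h1 : ∀ i : Fin n, Pe (i : ℕ) (rho q.1) k = 0 := fun i =>
      Pe_coord_zero _ _ _ (by have := i.2; omega)
    have h2 : ∀ i : Fin n, ee (2 * (i : ℕ) + 1) k = 0 := fun i => by
      rw [ee_apply, if_neg (by have := i.2; omega)]
    simp only [fun i : Fin n => h1 i, fun i : Fin n => h2 i, mul_zero, Finset.sum_const_zero,
      add_zero]
  · intro k
    have : (fun q : ℝ × E n × E n => Theta q.1 (inclR n q.2.1) (inclR n q.2.2) k) =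
        fun q => Real.cos (gam q.1) * (∑ i : Fin n, q.2.2 i * Pe (i : ℕ) (rho q.1) k) +
          Real.sin (gam q.1) * (∑ i : Fin n, q.2.1 i * ee (2 * (i : ℕ) + 1) k) := by
      funext q
      exact Theta_stage_coord n q.1 q.2.1 q.2.2 k
    rw [this]
    have hc1 : Continuous fun q : ℝ × E n × E n => q.1 := continuous_fst
    refine ((Real.continuous_cos.comp (continuous_gam.comp hc1)).mul ?_).add
      ((Real.continuous_sin.comp (continuous_gam.comp hc1)).mul ?_)
    · refine continuous_finset_sum _ fun i _ => ?_
      exact ((continuous_coordE i).comp (continuous_snd.comp continuous_snd)).mul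
        ((continuous_Pe_coord _ k).comp (continuous_rho.comp hc1))
    · refine continuous_finset_sum _ fun i _ => ?_
      exact (((continuous_coordE i).comp (continuous_fst.comp continuous_snd))).mul
        continuous_const

theorem continuous_ThetaMap :
    Continuous (fun q : ℝ × Rinf × Rinf => Theta q.1 q.2.1 q.2.2) := by
  rw [continuous_def]
  intro V hV
  apply isOpen_of_stages
  intro n
  exact (continuous_Theta_stage n).isOpen_preimage V hV

/-! ### pairing is continuous for compact-open topologies (T2 target domain) -/

lemma continuous_prodMk_CO {Z X Y₁ Y₂ : Type*} [TopologicalSpace Z] [TopologicalSpace X]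
    [TopologicalSpace Y₁] [TopologicalSpace Y₂] [T2Space X]
    {h₁ : Z → C(X, Y₁)} {h₂ : Z → C(X, Y₂)} (c₁ : Continuous h₁) (c₂ : Continuous h₂) :
    Continuous fun z => (h₁ z).prodMk (h₂ z) := by
  rw [ContinuousMap.continuous_compactOpen]
  intro K hK U hU
  rw [isOpen_iff_mem_nhds]
  intro z₀ hz₀
  have hex : ∀ x : X, x ∈ K → ∃ AB : Set Y₁ × Set Y₂,
      IsOpen AB.1 ∧ IsOpen AB.2 ∧ h₁ z₀ x ∈ AB.1 ∧ h₂ z₀ x ∈ AB.2 ∧ AB.1 ×ˢ AB.2 ⊆ U := by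
    intro x hx
    have hmem : (h₁ z₀ x, h₂ z₀ x) ∈ U := hz₀ hx
    obtain ⟨A, B, hA, hB, hxA, hxB, hABU⟩ := isOpen_prod_iff.1 hU _ _ hmem
    exact ⟨(A, B), hA, hB, hxA, hxB, hABU⟩
  choose AB hA hB hxA hxB hABU using hex
  let O : K → Set X := fun i => ⇑(h₁ z₀) ⁻¹' (AB i i.2).1 ∩ ⇑(h₂ z₀) ⁻¹' (AB i i.2).2
  have hOopen : ∀ i : K, IsOpen (O i) := fun i =>
    ((hA i i.2).preimage (h₁ z₀).continuous).inter ((hB i i.2).preimage (h₂ z₀).continuous)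
  have hcover : K ⊆ ⋃ i : K, O i := fun x hx =>
    Set.mem_iUnion.2 ⟨⟨x, hx⟩, ⟨hxA x hx, hxB x hx⟩⟩
  obtain ⟨tf, htf⟩ := hK.elim_finite_subcover O hOopen hcover
  obtain ⟨Ki, hKic, hKiO, hKeq⟩ := hK.finite_compact_cover tf O
    (fun i _ => hOopen i) htf
  have hopen : IsOpen (⋂ i ∈ tf, ({g : Z | Set.MapsTo (⇑(h₁ g)) (Ki i) (AB i i.2).1} ∩
      {g : Z | Set.MapsTo (⇑(h₂ g)) (Ki i) (AB i i.2).2})) := by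
    refine isOpen_biInter_finset fun i _ => IsOpen.inter ?_ ?_
    · exact (ContinuousMap.isOpen_setOf_mapsTo (hKic i) (hA i i.2)).preimage c₁
    · exact (ContinuousMap.isOpen_setOf_mapsTo (hKic i) (hB i i.2)).preimage c₂
  refine Filter.mem_of_superset (hopen.mem_nhds ?_) ?_
  · refine Set.mem_iInter₂.2 fun i _ => ⟨fun x hx => ?_, fun x hx => ?_⟩
    · exact (hKiO i hx).1
    · exact (hKiO i hx).2
  · intro z hz x hx
    have hx' : x ∈ ⋃ i ∈ tf, Ki i := by rw [← hKeq]; exact hx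
    obtain ⟨i, hi, hxi⟩ := Set.mem_iUnion₂.1 hx'
    have hzi := Set.mem_iInter₂.1 hz i hi
    exact hABU i i.2 (Set.mem_prod.2 ⟨hzi.1 hxi, hzi.2 hxi⟩)

/-! ### assembly -/

def ThetaCM : C(ℝ × Rinf × Rinf, Rinf) := ⟨fun q => Theta q.1 q.2.1 q.2.2, continuous_ThetaMap⟩

def FC (p : unitInterval × LMon) : C(Rinf, Rinf) :=
  ThetaCM.comp ((ContinuousMap.const Rinf ((p.1 : ℝ))).prodMk
    ((ContinuousMap.id Rinf).prodMk (p.2.1)))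

lemma FC_apply (p : unitInterval × LMon) (x : Rinf) :
    FC p x = Theta (p.1 : ℝ) x (p.2.1 x) := rfl

lemma continuous_FC : Continuous FC := by
  refine (ContinuousMap.continuous_postcomp ThetaCM).comp ?_
  refine continuous_prodMk_CO ?_ ?_
  · exact ContinuousMap.continuous_const'.comp (continuous_subtype_val.comp continuous_fst)
  · refine continuous_prodMk_CO continuous_const ?_
    exact continuous_subtype_val.comp continuous_snd

lemma linIso_FC (p : unitInterval × LMon) : LinIso (FC p) := by
  obtain ⟨hadd, hsmul, hinner⟩ := p.2.2
  refine ⟨fun a b => ?_, fun c a => ?_, fun a b => ?_⟩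
  · rw [FC_apply, FC_apply, FC_apply, Theta, Theta, Theta, hadd, map_add, map_add]
    rw [smul_add, smul_add]
    abel
  · rw [FC_apply, FC_apply, Theta, Theta, hsmul, map_smul, map_smul,
      smul_comm _ c, smul_comm _ c, smul_add]
  · rw [FC_apply, FC_apply]
    exact rinner_Theta _ a b hinner

def FL (p : unitInterval × LMon) : LMon := ⟨FC p, linIso_FC p⟩

lemma continuous_FL : Continuous FL := continuous_FC.subtype_mk _

def idmon : LMon := ⟨ContinuousMap.id Rinf, fun _ _ => rfl, fun _ _ => rfl, fun _ _ => rfl⟩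

lemma Theta_zero (x y : Rinf) : Theta 0 x y = y := by
  rw [Theta, gam_of_le 0 (by norm_num), rho_at_zero]
  simp only [Real.cos_zero, Real.sin_zero, one_smul, zero_smul, add_zero]
  exact Pl_at_zero y

lemma Theta_one (x y : Rinf) : Theta 1 x y = Bl x := by
  rw [Theta, gam_at_one]
  simp only [Real.cos_pi_div_two, Real.sin_pi_div_two, one_smul, zero_smul, zero_add]

theorem LMon_contractible' : ContractibleSpace LMon := by
  rw [contractible_iff_id_nullhomotopic]
  refine ⟨FL (1, idmon), ⟨?_⟩⟩
  refine { toFun := FL, continuous_toFun := continuous_FL,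
           map_zero_left := ?_, map_one_left := ?_ }
  · intro f
    apply Subtype.ext
    apply ContinuousMap.ext
    intro x
    show FC (0, f) x = f.1 x
    rw [FC_apply]
    have h0 : (((0 : unitInterval) : ℝ)) = (0 : ℝ) := rfl
    rw [h0, Theta_zero]
  · intro f
    apply Subtype.ext
    apply ContinuousMap.ext
    intro x
    show FC (1, f) x = FC (1, idmon) x
    rw [FC_apply, FC_apply]
    have h1 : ((1 : unitInterval) : ℝ) = (1 : ℝ) := rfl
    rw [h1, Theta_one, Theta_one]

end Contr

/-- The underlying space of the monoid `L = L(ℝ^∞, ℝ^∞)` of linear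
isometric self-embeddings of `ℝ^∞` is contractible. -/
theorem LMon_contractible : ContractibleSpace LMon := by
  exact Contr.LMon_contractible'

end
end
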